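/- arXiv:1905.08142 — 7 statements merged into one kernel-verified Lean document; each statement's English description precedes it below -/
import Mathlib

section
/- Let K ⊆ K̂ ⊆ ℝⁿ be convex bodies, let f be an n-variate real polynomial, and let a ∈ K be a global minimizer of f on K. Assume K and K̂ are locally similar at a, i.e. there exists ε₁ > 0 with B_{ε₁}(a) ∩ K = B_{ε₁}(a) ∩ K̂. Let w be a weight function on K and ŵ a weight function on K̂ such that ŵ(x) ≥ w(x) for all x ∈ int(K), and suppose there exist ε₂ > 0 and m_a > 0 with m_a · ŵ(x) ≤ w(x) for all x ∈ B_{ε₂}(a) ∩ int(K). Then there exist an n-variate real polynomial g with g(a) = f(a), f(x) ≤ g(x) for all x ∈ K̂, g(x) ≥ f(a) for all x ∈ K̂, and an integer r₀ such that for all r ≥ r₀: g^{(r)}_{K,w} − f(a) ≤ (2/m_a) · (g^{(r)}_{K̂,ŵ} − f(a)). -/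
open MeasureTheory

noncomputable section

/-- A polynomial is a sum of squares. -/
def IsSOS {n : ℕ} (q : MvPolynomial (Fin n) ℝ) : Prop :=
  ∃ (m : ℕ) (p : Fin m → MvPolynomial (Fin n) ℝ), q = ∑ i, p i ^ 2

/-- The Lasserre measure-based upper bound `f^{(r)}_{K,w}`: the infimum of
`∫_K f q w dx` over sum-of-squares polynomials `q` of degree at most `2r`
with `∫_K q w dx = 1`. -/
noncomputable def lasserre {n : ℕ} (r : ℕ) (K : Set (EuclideanSpace ℝ (Fin n)))
    (w f : EuclideanSpace ℝ (Fin n) → ℝ) : ℝ :=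
  sInf { v : ℝ | ∃ q : MvPolynomial (Fin n) ℝ, IsSOS q ∧ q.totalDegree ≤ 2 * r ∧
    (∫ x in K, MvPolynomial.eval (fun i => x i) q * w x) = 1 ∧
    v = ∫ x in K, f x * MvPolynomial.eval (fun i => x i) q * w x }

/-- The error `E^{(r)}_{K,w}(f) = f^{(r)}_{K,w} - min_{x ∈ K} f(x)`. -/
noncomputable def lasserreError {n : ℕ} (r : ℕ) (K : Set (EuclideanSpace ℝ (Fin n)))
    (w f : EuclideanSpace ℝ (Fin n) → ℝ) : ℝ :=
  lasserre r K w f - sInf (f '' K)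

/-- `w` is a weight function on `K`: continuous and positive on the interior of `K`,
with finite positive integral over `K`. -/
def IsWeightFn {n : ℕ} (K : Set (EuclideanSpace ℝ (Fin n)))
    (w : EuclideanSpace ℝ (Fin n) → ℝ) : Prop :=
  ContinuousOn w (interior K) ∧ (∀ x ∈ interior K, 0 < w x) ∧
    IntegrableOn w K ∧ 0 < ∫ x in K, w x

/-!
Penalize `f` by a multiple of the squared distance to `a`: `g = f + c ‖x - a‖²` touches `f` at `a`,
stays above `f a` on `K̂` (near `a` because `K̂` agrees with `K` there, far from `a` because the
penalty beats the oscillation of `f`), and exceeds `f a` by a fixed `δ > 0` outside `B(a, ε)`.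
By Markov's inequality, a sum-of-squares density `q ŵ` on `K̂` whose `g`-average is within `δ / 2`
of `f a` puts at least half of its mass in `K̂ ∩ B(a, ε) = K ∩ B(a, ε)`, where `w ≥ m_a ŵ`; so `q w`
has mass at least `m_a / 2` on `K`, while its `g`-excess over `f a` can only drop since `w ≤ ŵ`.
Renormalizing `q` for `(K, w)` costs the factor `2 / m_a`. Densities with a larger excess are
beaten by one fixed density `q₀` of excess at most `δ / 2`, a high even power of
`1 - ‖x - a‖² / R`, which concentrates at `a`; `r₀` is its degree.
-/

open Metric Filter Topology

theorem eventually_mul_pow_le_mul_pow {x y : ℝ} (hy : 0 ≤ y) (hyx : y < x) (c : ℝ) {d : ℝ}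
    (hd : 0 < d) : ∀ᶠ k : ℕ in atTop, c * y ^ k ≤ d * x ^ k := by
  have hx : 0 < x := hy.trans_lt hyx
  have hlim : Tendsto (fun k : ℕ => c * (y / x) ^ k) atTop (𝓝 0) := by
    simpa using (tendsto_pow_atTop_nhds_zero_of_lt_one (div_nonneg hy hx.le)
      ((div_lt_one hx).2 hyx)).const_mul c
  filter_upwards [hlim.eventually (gt_mem_nhds hd)] with k hk
  rw [div_pow, ← mul_div_assoc, div_lt_iff₀ (pow_pos hx k)] at hk
  exact hk.le

theorem mul_one_sub_div_pow_le {N θ R : ℝ} (hR : 0 < R) (hNR : N ≤ R) (hθ : 0 ≤ θ) (hθR : θ ≤ R)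
    (k : ℕ) : N * (1 - N / R) ^ k ≤ θ * (1 - N / R) ^ k + R * (1 - θ / R) ^ k := by
  have hu : 0 ≤ 1 - N / R := sub_nonneg.2 ((div_le_one hR).2 hNR)
  have huθ : 0 ≤ 1 - θ / R := sub_nonneg.2 ((div_le_one hR).2 hθR)
  rcases le_total N θ with h | h
  · nlinarith [mul_le_mul_of_nonneg_right h (pow_nonneg hu k), pow_nonneg huθ k]
  · have h1 : (1 - N / R) ^ k ≤ (1 - θ / R) ^ k := pow_le_pow_left₀ hu (by gcongr) k
    nlinarith [mul_le_mul hNR h1 (pow_nonneg hu k) hR.le, mul_nonneg hθ (pow_nonneg hu k)]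

section ConvexBody

variable {E : Type*} [NormedAddCommGroup E] [NormedSpace ℝ E] [MeasurableSpace E] [BorelSpace E]
  [FiniteDimensional ℝ E] (μ : Measure E) [μ.IsAddHaarMeasure] {s : Set E}

theorem Convex.ae_restrict_mem_interior (hs : Convex ℝ s) : ∀ᵐ x ∂μ.restrict s, x ∈ interior s := by
  filter_upwards [ae_restrict_mem₀ (hs.nullMeasurableSet μ),
    ae_restrict_of_ae (measure_eq_zero_iff_ae_notMem.1 (hs.addHaar_frontier μ))] with x hx hfx
  by_contra h
  exact hfx ⟨subset_closure hx, h⟩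

theorem Convex.ae_restrict_of_forall_mem_interior (hs : Convex ℝ s) {p : E → Prop}
    (h : ∀ x ∈ interior s, p x) : ∀ᵐ x ∂μ.restrict s, p x :=
  (hs.ae_restrict_mem_interior μ).mono h

end ConvexBody

section SetIntegral

variable {α : Type*} [MeasurableSpace α] {μ : Measure α}

/-- Markov's inequality for the density `φ`, applied to `h ≥ δ` off `t`. -/
theorem half_setIntegral_le_setIntegral_inter {s t : Set α} (hs : MeasurableSet s)
    (ht : MeasurableSet t) {φ h : α → ℝ} {δ : ℝ} (hδ : 0 < δ) (hφ : IntegrableOn φ s μ)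
    (hhφ : IntegrableOn (fun x => h x * φ x) s μ) (hφ0 : ∀ᵐ x ∂μ.restrict s, 0 ≤ φ x)
    (hh0 : ∀ x ∈ s, 0 ≤ h x) (hhδ : ∀ x ∈ s \ t, δ ≤ h x)
    (hhφδ : ∫ x in s, h x * φ x ∂μ ≤ δ / 2 * ∫ x in s, φ x ∂μ) :
    (∫ x in s, φ x ∂μ) / 2 ≤ ∫ x in s ∩ t, φ x ∂μ := by
  have hsplit := integral_inter_add_sdiff ht hφ
  have hφ0' : ∀ᵐ x ∂μ.restrict (s \ t), 0 ≤ φ x :=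
    ae_restrict_of_ae_restrict_of_subset Set.sdiff_subset hφ0
  have markov : δ * ∫ x in s \ t, φ x ∂μ ≤ ∫ x in s, h x * φ x ∂μ :=
    calc δ * ∫ x in s \ t, φ x ∂μ = ∫ x in s \ t, δ * φ x ∂μ := (integral_const_mul δ _).symm
      _ ≤ ∫ x in s \ t, h x * φ x ∂μ := by
        refine setIntegral_mono_ae_restrict ((hφ.mono_set Set.sdiff_subset).const_mul δ)
          (hhφ.mono_set Set.sdiff_subset) ?_
        filter_upwards [ae_restrict_mem (hs.diff ht), hφ0'] with x hx hx0
        exact mul_le_mul_of_nonneg_right (hhδ x hx) hx0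
      _ ≤ ∫ x in s, h x * φ x ∂μ := by
        refine setIntegral_mono_set hhφ ?_ Set.sdiff_subset.eventuallyLE
        filter_upwards [ae_restrict_mem hs, hφ0] with x hx hx0
        exact mul_nonneg (hh0 x hx) hx0
  have hout : ∫ x in s \ t, φ x ∂μ ≤ (∫ x in s, φ x ∂μ) / 2 := by
    rw [le_div_iff₀ two_pos]
    nlinarith
  linarith

variable [TopologicalSpace α] [OpensMeasurableSpace α] [T2Space α]

theorem setIntegral_sub_mul_eq {s : Set α} (hs : IsCompact s) {w : α → ℝ}
    (hw : IntegrableOn w s μ) {G Q : α → ℝ} (hG : Continuous G) (hQ : Continuous Q) (m : ℝ) :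
    ∫ x in s, (G x - m) * (Q x * w x) ∂μ =
      ∫ x in s, G x * Q x * w x ∂μ - m * ∫ x in s, Q x * w x ∂μ := by
  have hQw := hw.continuousOn_mul hQ.continuousOn hs
  simp_rw [sub_mul, mul_assoc]
  rw [integral_sub (hQw.continuousOn_mul hG.continuousOn hs) (hQw.const_mul m),
    integral_const_mul]

end SetIntegral

section Concentration

variable {α : Type*} [MetricSpace α] [MeasurableSpace α] [OpensMeasurableSpace α]
  {μ : Measure α} {s : Set α} {w : α → ℝ} {a : α}

theorem setIntegral_inter_ball_pos [μ.IsOpenPosMeasure] (hwpos : ∀ x ∈ interior s, 0 < w x)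
    (hw : IntegrableOn w s μ) (hw0 : ∀ᵐ x ∂μ.restrict s, 0 ≤ w x)
    (ha : a ∈ closure (interior s)) {r : ℝ} (hr : 0 < r) : 0 < ∫ x in s ∩ ball a r, w x ∂μ := by
  set U := interior s ∩ ball a r
  have hUo : IsOpen U := isOpen_interior.inter isOpen_ball
  have hUne : U.Nonempty := by
    obtain ⟨b, hb, hab⟩ := Metric.mem_closure_iff.1 ha r hr
    exact ⟨b, hb, mem_ball'.2 hab⟩
  have hUs : U ⊆ s ∩ ball a r := Set.inter_subset_inter_left _ interior_subset
  have hU : 0 < ∫ x in U, w x ∂μ := by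
    rw [setIntegral_pos_iff_support_of_nonneg_ae
      (ae_restrict_of_forall_mem hUo.measurableSet fun x hx => (hwpos x hx.1).le)
      (hw.mono_set (hUs.trans Set.inter_subset_left))]
    exact (hUo.measure_pos μ hUne).trans_le (measure_mono fun x hx => ⟨(hwpos x hx.1).ne', hx⟩)
  exact hU.trans_le (setIntegral_mono_set (hw.mono_set Set.inter_subset_left)
    (ae_restrict_of_ae_restrict_of_subset Set.inter_subset_left hw0) hUs.eventuallyLE)

variable {R : ℝ}

theorem pow_mul_setIntegral_inter_ball_le (hs : IsCompact s) (hw : IntegrableOn w s μ)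
    (hw0 : ∀ᵐ x ∂μ.restrict s, 0 ≤ w x) (hR0 : 0 < R) (hR : ∀ x ∈ s, dist x a ^ 2 ≤ R) {ρ : ℝ}
    (hρR : ρ ^ 2 ≤ R) (k : ℕ) :
    (1 - ρ ^ 2 / R) ^ k * ∫ x in s ∩ ball a ρ, w x ∂μ ≤
      ∫ x in s, (1 - dist x a ^ 2 / R) ^ k * w x ∂μ := by
  have hQw : IntegrableOn (fun x => (1 - dist x a ^ 2 / R) ^ k * w x) s μ :=
    hw.continuousOn_mul (by fun_prop) hs
  have hs' := hs.measurableSet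
  rw [← integral_const_mul]
  calc ∫ x in s ∩ ball a ρ, (1 - ρ ^ 2 / R) ^ k * w x ∂μ
      ≤ ∫ x in s ∩ ball a ρ, (1 - dist x a ^ 2 / R) ^ k * w x ∂μ := by
        refine setIntegral_mono_ae_restrict ((hw.mono_set Set.inter_subset_left).const_mul _)
          (hQw.mono_set Set.inter_subset_left) ?_
        filter_upwards [ae_restrict_mem (hs'.inter measurableSet_ball),
          ae_restrict_of_ae_restrict_of_subset Set.inter_subset_left hw0] with x hx hx0
        have hxa : dist x a ^ 2 ≤ ρ ^ 2 := by
          nlinarith [mem_ball.1 hx.2, dist_nonneg (x := x) (y := a)]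
        gcongr
        exact sub_nonneg.2 ((div_le_one hR0).2 hρR)
    _ ≤ ∫ x in s, (1 - dist x a ^ 2 / R) ^ k * w x ∂μ := by
        refine setIntegral_mono_set hQw ?_ Set.inter_subset_left.eventuallyLE
        filter_upwards [ae_restrict_mem hs', hw0] with x hx hx0
        exact mul_nonneg (pow_nonneg (sub_nonneg.2 ((div_le_one hR0).2 (hR x hx))) k) hx0

theorem setIntegral_dist_sq_mul_pow_le (hs : IsCompact s) (hw : IntegrableOn w s μ)
    (hw0 : ∀ᵐ x ∂μ.restrict s, 0 ≤ w x) (hR0 : 0 < R) (hR : ∀ x ∈ s, dist x a ^ 2 ≤ R) {θ : ℝ}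
    (hθ : 0 ≤ θ) (hθR : θ ≤ R) (k : ℕ) :
    ∫ x in s, dist x a ^ 2 * ((1 - dist x a ^ 2 / R) ^ k * w x) ∂μ ≤
      θ * ∫ x in s, (1 - dist x a ^ 2 / R) ^ k * w x ∂μ +
        R * (1 - θ / R) ^ k * ∫ x in s, w x ∂μ := by
  have hQw : IntegrableOn (fun x => (1 - dist x a ^ 2 / R) ^ k * w x) s μ :=
    hw.continuousOn_mul (by fun_prop) hs
  rw [← integral_const_mul, ← integral_const_mul, ← integral_add (hQw.const_mul θ)
    (hw.const_mul _)]
  refine setIntegral_mono_ae_restrict (hQw.continuousOn_mul (by fun_prop) hs)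
    ((hQw.const_mul θ).add (hw.const_mul _)) ?_
  filter_upwards [ae_restrict_mem hs.measurableSet, hw0] with x hx hx0
  have := mul_le_mul_of_nonneg_right (mul_one_sub_div_pow_le hR0 (hR x hx) hθ hθR k) hx0
  linarith

/-- Within `ε / 2` of `a` the weight `(1 - dist x a ^ 2 / R) ^ k` is at least
`(1 - ε ^ 2 / 4R) ^ k`, at distance `≥ ε / √2` it is at most the exponentially smaller
`(1 - ε ^ 2 / 2R) ^ k`. -/
theorem eventually_setIntegral_dist_sq_mul_le (hs : IsCompact s) (hw : IntegrableOn w s μ)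
    (hw0 : ∀ᵐ x ∂μ.restrict s, 0 ≤ w x) {ε : ℝ} (hε : 0 < ε) (hεR : ε ^ 2 ≤ R)
    (hR : ∀ x ∈ s, dist x a ^ 2 ≤ R) (hpos : 0 < ∫ x in s ∩ ball a (ε / 2), w x ∂μ) :
    ∀ᶠ k : ℕ in atTop,
      0 < ∫ x in s, (1 - dist x a ^ 2 / R) ^ k * w x ∂μ ∧
      ∫ x in s, dist x a ^ 2 * ((1 - dist x a ^ 2 / R) ^ k * w x) ∂μ ≤
        ε ^ 2 * ∫ x in s, (1 - dist x a ^ 2 / R) ^ k * w x ∂μ := by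
  have hε2 : 0 < ε ^ 2 := by positivity
  have hR0 : 0 < R := hε2.trans_le hεR
  have hfar : 0 ≤ 1 - ε ^ 2 / 2 / R := sub_nonneg.2 ((div_le_one hR0).2 (by linarith))
  have hfar_lt : 1 - ε ^ 2 / 2 / R < 1 - (ε / 2) ^ 2 / R := by gcongr; nlinarith
  filter_upwards [eventually_mul_pow_le_mul_pow hfar hfar_lt (R * ∫ x in s, w x ∂μ)
    (by positivity : 0 < ε ^ 2 / 2 * ∫ x in s ∩ ball a (ε / 2), w x ∂μ)] with k hk
  have hlow := pow_mul_setIntegral_inter_ball_le hs hw hw0 hR0 hR (ρ := ε / 2) (by nlinarith) k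
  have hup := setIntegral_dist_sq_mul_pow_le hs hw hw0 hR0 hR (θ := ε ^ 2 / 2) (by positivity)
    (by linarith) k
  have hnear : 0 < (1 - (ε / 2) ^ 2 / R) ^ k := pow_pos (hfar.trans_lt hfar_lt) k
  refine ⟨(mul_pos hnear hpos).trans_le hlow, ?_⟩
  linarith [mul_le_mul_of_nonneg_left hlow (by positivity : (0 : ℝ) ≤ ε ^ 2 / 2)]

end Concentration

section Polynomial

variable {n : ℕ}

theorem IsSOS.eval_nonneg {q : MvPolynomial (Fin n) ℝ} (hq : IsSOS q) (y : Fin n → ℝ) :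
    0 ≤ MvPolynomial.eval y q := by
  obtain ⟨m, p, rfl⟩ := hq
  simp only [map_sum, map_pow]
  positivity

theorem IsSOS.C_mul {q : MvPolynomial (Fin n) ℝ} (hq : IsSOS q) {c : ℝ} (hc : 0 ≤ c) :
    IsSOS (MvPolynomial.C c * q) := by
  obtain ⟨m, p, rfl⟩ := hq
  refine ⟨m, fun i => MvPolynomial.C (√c) * p i, ?_⟩
  simp only [Finset.mul_sum, mul_pow, ← map_pow, Real.sq_sqrt hc]

theorem isSOS_sq (p : MvPolynomial (Fin n) ℝ) : IsSOS (p ^ 2) :=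
  ⟨1, fun _ => p, by simp⟩

theorem continuous_eval_euclidean (q : MvPolynomial (Fin n) ℝ) :
    Continuous fun x : EuclideanSpace ℝ (Fin n) => MvPolynomial.eval (fun i => x i) q :=
  (MvPolynomial.continuous_eval q).comp (by fun_prop)

def sqDistPoly (a : EuclideanSpace ℝ (Fin n)) : MvPolynomial (Fin n) ℝ :=
  ∑ i, (MvPolynomial.X i - MvPolynomial.C (a i)) ^ 2

theorem eval_sqDistPoly (a x : EuclideanSpace ℝ (Fin n)) :
    MvPolynomial.eval (fun i => x i) (sqDistPoly a) = dist x a ^ 2 := by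
  rw [EuclideanSpace.dist_eq, Real.sq_sqrt (by positivity)]
  simp [sqDistPoly, Real.dist_eq, sq_abs]

theorem exists_isSOS_setIntegral_dist_sq_le {K : Set (EuclideanSpace ℝ (Fin n))}
    (hK : IsCompact K) {w : EuclideanSpace ℝ (Fin n) → ℝ} (hwpos : ∀ x ∈ interior K, 0 < w x)
    (hw : IntegrableOn w K) (hw0 : ∀ᵐ x ∂volume.restrict K, 0 ≤ w x)
    {a : EuclideanSpace ℝ (Fin n)} (ha : a ∈ closure (interior K)) {ε : ℝ} (hε : 0 < ε) :
    ∃ q : MvPolynomial (Fin n) ℝ, IsSOS q ∧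
      0 < ∫ x in K, MvPolynomial.eval (fun i => x i) q * w x ∧
      ∫ x in K, dist x a ^ 2 * (MvPolynomial.eval (fun i => x i) q * w x) ≤
        ε ^ 2 * ∫ x in K, MvPolynomial.eval (fun i => x i) q * w x := by
  obtain ⟨R₀, hR₀⟩ := hK.exists_bound_of_continuousOn
    (by fun_prop : Continuous fun x => dist x a ^ 2).continuousOn
  set R := max R₀ (ε ^ 2)
  have hR : ∀ x ∈ K, dist x a ^ 2 ≤ R := fun x hx =>
    (le_abs_self _).trans ((Real.norm_eq_abs _ ▸ hR₀ x hx).trans (le_max_left _ _))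
  obtain ⟨m, hm⟩ := eventually_atTop.1 (eventually_setIntegral_dist_sq_mul_le hK hw hw0 hε
    (le_max_right _ _) hR (setIntegral_inter_ball_pos hwpos hw hw0 ha (half_pos hε)))
  have heval : ∀ x : EuclideanSpace ℝ (Fin n),
      MvPolynomial.eval (fun i => x i) (((1 - MvPolynomial.C R⁻¹ * sqDistPoly a) ^ m) ^ 2) =
        (1 - dist x a ^ 2 / R) ^ (2 * m) := by
    simp [eval_sqDistPoly, ← pow_mul, mul_comm m 2, div_eq_inv_mul]
  refine ⟨((1 - MvPolynomial.C R⁻¹ * sqDistPoly a) ^ m) ^ 2, isSOS_sq _, ?_⟩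
  simpa only [heval] using hm (2 * m) (by omega)

end Polynomial

section Lasserre

variable {n r : ℕ} {K : Set (EuclideanSpace ℝ (Fin n))} {w G : EuclideanSpace ℝ (Fin n) → ℝ}

theorem IsSOS.exists_setIntegral_eq_one {q : MvPolynomial (Fin n) ℝ} (hq : IsSOS q)
    (hc : 0 < ∫ x in K, MvPolynomial.eval (fun i => x i) q * w x) :
    ∃ q' : MvPolynomial (Fin n) ℝ, IsSOS q' ∧ q'.totalDegree ≤ q.totalDegree ∧
      ∫ x in K, MvPolynomial.eval (fun i => x i) q' * w x = 1 ∧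
      ∀ G : EuclideanSpace ℝ (Fin n) → ℝ,
        ∫ x in K, G x * MvPolynomial.eval (fun i => x i) q' * w x =
          (∫ x in K, G x * MvPolynomial.eval (fun i => x i) q * w x) /
            ∫ x in K, MvPolynomial.eval (fun i => x i) q * w x := by
  set c := ∫ x in K, MvPolynomial.eval (fun i => x i) q * w x
  refine ⟨MvPolynomial.C c⁻¹ * q, hq.C_mul (inv_nonneg.2 hc.le), ?_, ?_, fun G => ?_⟩
  · simpa using MvPolynomial.totalDegree_mul (MvPolynomial.C c⁻¹) q
  · simp_rw [map_mul, MvPolynomial.eval_C, mul_assoc]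
    rw [integral_const_mul, inv_mul_cancel₀ hc.ne']
  · simp_rw [map_mul, MvPolynomial.eval_C, mul_left_comm _ c⁻¹, mul_assoc]
    rw [integral_const_mul, inv_mul_eq_div]

theorem le_lasserre {v : ℝ} {q₀ : MvPolynomial (Fin n) ℝ} (hq₀ : IsSOS q₀)
    (hdeg : q₀.totalDegree ≤ 2 * r) (hc : 0 < ∫ x in K, MvPolynomial.eval (fun i => x i) q₀ * w x)
    (h : ∀ q : MvPolynomial (Fin n) ℝ, IsSOS q → q.totalDegree ≤ 2 * r →
      ∫ x in K, MvPolynomial.eval (fun i => x i) q * w x = 1 →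
        v ≤ ∫ x in K, G x * MvPolynomial.eval (fun i => x i) q * w x) :
    v ≤ lasserre r K w G := by
  obtain ⟨q, hq, hqdeg, hq1, -⟩ := hq₀.exists_setIntegral_eq_one hc
  exact le_csInf ⟨_, q, hq, hqdeg.trans hdeg, hq1, rfl⟩
    (by rintro _ ⟨q, hq, hqdeg, hq1, rfl⟩; exact h q hq hqdeg hq1)

theorem lasserre_le_add_div (hK : IsCompact K) (hw : IntegrableOn w K)
    (hw0 : ∀ᵐ x ∂volume.restrict K, 0 ≤ w x) (hG : Continuous G) {m : ℝ}
    (hGm : ∀ x ∈ K, m ≤ G x) {q : MvPolynomial (Fin n) ℝ} (hq : IsSOS q)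
    (hdeg : q.totalDegree ≤ 2 * r) (hc : 0 < ∫ x in K, MvPolynomial.eval (fun i => x i) q * w x) :
    lasserre r K w G ≤ m + (∫ x in K, (G x - m) * (MvPolynomial.eval (fun i => x i) q * w x)) /
      ∫ x in K, MvPolynomial.eval (fun i => x i) q * w x := by
  have hbdd : ∀ p : MvPolynomial (Fin n) ℝ, IsSOS p →
      ∫ x in K, MvPolynomial.eval (fun i => x i) p * w x = 1 →
        m ≤ ∫ x in K, G x * MvPolynomial.eval (fun i => x i) p * w x := by
    intro p hp hp1
    have h := setIntegral_sub_mul_eq hK hw hG (continuous_eval_euclidean p) m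
    have h0 : 0 ≤ ∫ x in K, (G x - m) * (MvPolynomial.eval (fun i => x i) p * w x) := by
      refine setIntegral_nonneg_of_ae_restrict ?_
      filter_upwards [ae_restrict_mem hK.measurableSet, hw0] with x hx hx0
      exact mul_nonneg (sub_nonneg.2 (hGm x hx)) (mul_nonneg (hp.eval_nonneg _) hx0)
    rw [hp1] at h
    linarith
  obtain ⟨q', hq', hq'deg, hq'1, hval⟩ := hq.exists_setIntegral_eq_one hc
  calc lasserre r K w G ≤ ∫ x in K, G x * MvPolynomial.eval (fun i => x i) q' * w x :=
        csInf_le ⟨m, by rintro _ ⟨p, hp, -, hp1, rfl⟩; exact hbdd p hp hp1⟩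
          ⟨q', hq', hq'deg.trans hdeg, hq'1, rfl⟩
    _ = _ := by
        rw [hval, setIntegral_sub_mul_eq hK hw hG (continuous_eval_euclidean q) m]
        field_simp
        ring

end Lasserre

section Comparison

variable {n r : ℕ} {K Khat B : Set (EuclideanSpace ℝ (Fin n))}
  {w what G : EuclideanSpace ℝ (Fin n) → ℝ} {m δ ma : ℝ}

theorem lasserre_le_add_two_div_mul (hsub : K ⊆ Khat) (hK : IsCompact K) (hKh : IsCompact Khat)
    (hB : MeasurableSet B) (hsim : Khat ∩ B ⊆ K) (hw : IntegrableOn w K)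
    (hwh : IntegrableOn what Khat) (hw0 : ∀ᵐ x ∂volume.restrict K, 0 ≤ w x)
    (hwh0 : ∀ᵐ x ∂volume.restrict Khat, 0 ≤ what x)
    (hdom : ∀ᵐ x ∂volume.restrict K, w x ≤ what x) (hma : 0 < ma)
    (hloc : ∀ᵐ x ∂volume.restrict K, x ∈ B → ma * what x ≤ w x) (hG : Continuous G)
    (hGm : ∀ x ∈ Khat, m ≤ G x) (hδ : 0 < δ) (hGδ : ∀ x ∈ Khat \ B, m + δ ≤ G x)
    {q : MvPolynomial (Fin n) ℝ} (hq : IsSOS q) (hdeg : q.totalDegree ≤ 2 * r)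
    (hc : 0 < ∫ x in Khat, MvPolynomial.eval (fun i => x i) q * what x)
    (ht : ∫ x in Khat, (G x - m) * (MvPolynomial.eval (fun i => x i) q * what x) ≤
      δ / 2 * ∫ x in Khat, MvPolynomial.eval (fun i => x i) q * what x) :
    lasserre r K w G ≤ m + 2 / ma *
      ((∫ x in Khat, (G x - m) * (MvPolynomial.eval (fun i => x i) q * what x)) /
        ∫ x in Khat, MvPolynomial.eval (fun i => x i) q * what x) := by
  set Q := fun x : EuclideanSpace ℝ (Fin n) => MvPolynomial.eval (fun i => x i) q
  have hQ : Continuous Q := continuous_eval_euclidean q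
  set t := ∫ x in Khat, (G x - m) * (Q x * what x)
  have hQw := hw.continuousOn_mul hQ.continuousOn hK
  have hQwh := hwh.continuousOn_mul hQ.continuousOn hKh
  have hGm' : Continuous fun x => G x - m := hG.sub continuous_const
  have hGQwh : IntegrableOn (fun x => (G x - m) * (Q x * what x)) Khat :=
    hQwh.continuousOn_mul hGm'.continuousOn hKh
  have hGQwh0 : ∀ᵐ x ∂volume.restrict Khat, 0 ≤ (G x - m) * (Q x * what x) := by
    filter_upwards [ae_restrict_mem hKh.measurableSet, hwh0] with x hx hx0
    exact mul_nonneg (sub_nonneg.2 (hGm x hx)) (mul_nonneg (hq.eval_nonneg _) hx0)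
  have hnear := half_setIntegral_le_setIntegral_inter hKh.measurableSet hB hδ hQwh hGQwh
    (hwh0.mono fun x hx0 => mul_nonneg (hq.eval_nonneg _) hx0)
    (fun x hx => sub_nonneg.2 (hGm x hx)) (fun x hx => le_sub_iff_add_le'.2 (hGδ x hx)) ht
  rw [subset_antisymm (fun x hx => ⟨hsim hx, hx.2⟩) (Set.inter_subset_inter_left _ hsub)]
    at hnear
  have hmass : ma * ((∫ x in Khat, Q x * what x) / 2) ≤ ∫ x in K, Q x * w x :=
    calc ma * ((∫ x in Khat, Q x * what x) / 2)
        ≤ ∫ x in K ∩ B, ma * (Q x * what x) := by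
          rw [integral_const_mul]; gcongr
      _ ≤ ∫ x in K ∩ B, Q x * w x := by
        refine setIntegral_mono_ae_restrict
          ((hQwh.mono_set (Set.inter_subset_left.trans hsub)).const_mul ma)
          (hQw.mono_set Set.inter_subset_left) ?_
        filter_upwards [ae_restrict_of_ae_restrict_of_subset Set.inter_subset_left hloc,
          ae_restrict_mem (hK.measurableSet.inter hB)] with x hx hxB
        nlinarith [hx hxB.2, hq.eval_nonneg (fun i => x i)]
      _ ≤ ∫ x in K, Q x * w x := setIntegral_mono_set hQw
          (hw0.mono fun x hx0 => mul_nonneg (hq.eval_nonneg _) hx0)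
          Set.inter_subset_left.eventuallyLE
  have hval : ∫ x in K, (G x - m) * (Q x * w x) ≤ t :=
    calc ∫ x in K, (G x - m) * (Q x * w x) ≤ ∫ x in K, (G x - m) * (Q x * what x) := by
          refine setIntegral_mono_ae_restrict (hQw.continuousOn_mul hGm'.continuousOn hK)
            (hGQwh.mono_set hsub) ?_
          filter_upwards [ae_restrict_mem hK.measurableSet, hdom] with x hx hxd
          exact mul_le_mul_of_nonneg_left (mul_le_mul_of_nonneg_left hxd (hq.eval_nonneg _))
            (sub_nonneg.2 (hGm x (hsub hx)))
      _ ≤ t := setIntegral_mono_set hGQwh hGQwh0 hsub.eventuallyLE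
  have hmc : 0 < ma * ((∫ x in Khat, Q x * what x) / 2) := by positivity
  calc lasserre r K w G ≤ m + (∫ x in K, (G x - m) * (Q x * w x)) / ∫ x in K, Q x * w x :=
        lasserre_le_add_div hK hw hw0 hG (fun x hx => hGm x (hsub hx)) hq hdeg
          (hmc.trans_le hmass)
    _ ≤ m + t / (ma * ((∫ x in Khat, Q x * what x) / 2)) := by
        gcongr
        exact setIntegral_nonneg_of_ae_restrict hGQwh0
    _ = m + 2 / ma * (t / ∫ x in Khat, Q x * what x) := by field_simp

theorem lasserre_sub_le_two_div_mul (hsub : K ⊆ Khat) (hK : IsCompact K) (hKh : IsCompact Khat)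
    (hB : MeasurableSet B) (hsim : Khat ∩ B ⊆ K) (hw : IntegrableOn w K)
    (hwh : IntegrableOn what Khat) (hw0 : ∀ᵐ x ∂volume.restrict K, 0 ≤ w x)
    (hwh0 : ∀ᵐ x ∂volume.restrict Khat, 0 ≤ what x)
    (hdom : ∀ᵐ x ∂volume.restrict K, w x ≤ what x) (hma : 0 < ma)
    (hloc : ∀ᵐ x ∂volume.restrict K, x ∈ B → ma * what x ≤ w x) (hG : Continuous G)
    (hGm : ∀ x ∈ Khat, m ≤ G x) (hδ : 0 < δ) (hGδ : ∀ x ∈ Khat \ B, m + δ ≤ G x)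
    {q₀ : MvPolynomial (Fin n) ℝ} (hq₀ : IsSOS q₀) (hdeg : q₀.totalDegree ≤ 2 * r)
    (hc₀ : 0 < ∫ x in Khat, MvPolynomial.eval (fun i => x i) q₀ * what x)
    (ht₀ : ∫ x in Khat, (G x - m) * (MvPolynomial.eval (fun i => x i) q₀ * what x) ≤
      δ / 2 * ∫ x in Khat, MvPolynomial.eval (fun i => x i) q₀ * what x) :
    lasserre r K w G - m ≤ 2 / ma * (lasserre r Khat what G - m) := by
  have key := fun (q : MvPolynomial (Fin n) ℝ) => lasserre_le_add_two_div_mul (r := r) hsub hK hKh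
    hB hsim hw hwh hw0 hwh0 hdom hma hloc hG hGm hδ hGδ (q := q)
  have ht₀δ := (div_le_iff₀ hc₀).2 ht₀
  suffices m + ma / 2 * (lasserre r K w G - m) ≤ lasserre r Khat what G by
    rw [div_mul_eq_mul_div, le_div_iff₀' hma]
    linarith
  refine le_lasserre hq₀ hdeg hc₀ fun q hq hqdeg hq1 => ?_
  have hval := setIntegral_sub_mul_eq hKh hwh hG (continuous_eval_euclidean q) m
  set t := ∫ x in Khat, (G x - m) * (MvPolynomial.eval (fun i => x i) q * what x)
  rw [hq1, mul_one, eq_sub_iff_add_eq'] at hval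
  have hL : lasserre r K w G ≤ m + 2 / ma * t := by
    by_cases htδ : t ≤ δ / 2
    · simpa [hq1] using key q hq hqdeg (hq1 ▸ one_pos) (by rwa [hq1, mul_one])
    · exact (key q₀ hq₀ hdeg hc₀ ht₀).trans (by gcongr; linarith)
  have : ma / 2 * (2 / ma * t) = t := by field_simp
  rw [← hval]
  nlinarith

end Comparison

/-- With `c ε² = 6M + 1`, the excess `5M + 1` of `F + c dist(·, a)²` over `F a` off `B(a, ε)` is
at least twice its average excess `M + (6M + 1) / 4` against a density concentrated in
`B(a, ε / 2)`. -/
theorem add_mul_dist_sq_bounds {α : Type*} [MetricSpace α] [MeasurableSpace α]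
    [OpensMeasurableSpace α] {μ : Measure α} {s : Set α} (hs : IsCompact s) {F : α → ℝ}
    (hF : Continuous F) {a : α} {ε M c : ℝ} (hε : 0 ≤ ε) (hM0 : 0 ≤ M) (hc : c * ε ^ 2 = 6 * M + 1)
    (hM : ∀ x ∈ s, |F x - F a| ≤ M) (hmin : ∀ x ∈ s ∩ closedBall a ε, F a ≤ F x) {φ : α → ℝ}
    (hφ : IntegrableOn φ s μ) (hφ0 : ∀ᵐ x ∂μ.restrict s, 0 ≤ φ x)
    (hconc : ∫ x in s, dist x a ^ 2 * φ x ∂μ ≤ (ε / 2) ^ 2 * ∫ x in s, φ x ∂μ) :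
    (∀ x ∈ s, F a ≤ F x + c * dist x a ^ 2) ∧
    (∀ x ∈ s \ closedBall a ε, F a + (5 * M + 1) ≤ F x + c * dist x a ^ 2) ∧
    ∫ x in s, (F x + c * dist x a ^ 2 - F a) * φ x ∂μ ≤ (5 * M + 1) / 2 * ∫ x in s, φ x ∂μ := by
  have hc0 : 0 ≤ c := (pos_of_mul_pos_left (by rw [hc]; linarith) (sq_nonneg ε)).le
  have hfar : ∀ x ∈ s, ε ≤ dist x a → F a + (5 * M + 1) ≤ F x + c * dist x a ^ 2 := by
    intro x hx hxa
    have : c * ε ^ 2 ≤ c * dist x a ^ 2 := by gcongr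
    linarith [abs_le.1 (hM x hx)]
  refine ⟨fun x hx => ?_, fun x hx => hfar x hx.1 (not_le.1 fun h => hx.2 (mem_closedBall.2 h)).le,
    ?_⟩
  · rcases le_total (dist x a) ε with hxa | hxa
    · nlinarith [hmin x ⟨hx, mem_closedBall.2 hxa⟩, sq_nonneg (dist x a)]
    · linarith [hfar x hx hxa]
  have hdφ := hφ.continuousOn_mul (by fun_prop : Continuous fun x => dist x a ^ 2).continuousOn hs
  calc ∫ x in s, (F x + c * dist x a ^ 2 - F a) * φ x ∂μ
      ≤ ∫ x in s, (M * φ x + c * (dist x a ^ 2 * φ x)) ∂μ := by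
        refine setIntegral_mono_ae_restrict (hφ.continuousOn_mul (by fun_prop) hs)
          ((hφ.const_mul M).add (hdφ.const_mul c)) ?_
        filter_upwards [ae_restrict_mem hs.measurableSet, hφ0] with x hx hx0
        nlinarith [abs_le.1 (hM x hx)]
    _ = M * ∫ x in s, φ x ∂μ + c * ∫ x in s, dist x a ^ 2 * φ x ∂μ := by
        rw [integral_add (hφ.const_mul M) (hdφ.const_mul c), integral_const_mul,
          integral_const_mul]
    _ ≤ (5 * M + 1) / 2 * ∫ x in s, φ x ∂μ := by
        have hc4 : c * (ε / 2) ^ 2 = (6 * M + 1) / 4 := by rw [← hc]; ring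
        nlinarith [mul_le_mul_of_nonneg_left hconc hc0, setIntegral_nonneg_of_ae_restrict hφ0]

theorem stmt9_general {n : ℕ}
    (K Khat : Set (EuclideanSpace ℝ (Fin n))) (hsub : K ⊆ Khat)
    (hKc : IsCompact K) (hKconv : Convex ℝ K)
    (hKhc : IsCompact Khat) (hKhconv : Convex ℝ Khat) (hKhi : (interior Khat).Nonempty)
    (f : MvPolynomial (Fin n) ℝ)
    (F : EuclideanSpace ℝ (Fin n) → ℝ)
    (hF : ∀ x : EuclideanSpace ℝ (Fin n), F x = MvPolynomial.eval (fun i => x i) f)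
    (a : EuclideanSpace ℝ (Fin n)) (ha : a ∈ K)
    (hmin : ∀ x ∈ K, F a ≤ F x)
    (ε₁ : ℝ) (hε₁ : 0 < ε₁)
    (hsim : Metric.closedBall a ε₁ ∩ K = Metric.closedBall a ε₁ ∩ Khat)
    (w what : EuclideanSpace ℝ (Fin n) → ℝ)
    (hw : IsWeightFn K w) (hwhat : IsWeightFn Khat what)
    (hdom : ∀ x ∈ interior K, w x ≤ what x)
    (ma ε₂ : ℝ) (hma : 0 < ma) (hε₂ : 0 < ε₂)
    (hloc : ∀ x ∈ Metric.closedBall a ε₂ ∩ interior K, ma * what x ≤ w x) :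
    ∃ g : MvPolynomial (Fin n) ℝ,
      MvPolynomial.eval (fun i => a i) g = F a ∧
      (∀ x ∈ Khat, F x ≤ MvPolynomial.eval (fun i => x i) g) ∧
      (∀ x ∈ Khat, F a ≤ MvPolynomial.eval (fun i => x i) g) ∧
      ∃ r₀ : ℕ, ∀ r : ℕ, r₀ ≤ r →
        lasserre r K w (fun x => MvPolynomial.eval (fun i => x i) g) - F a ≤
          (2 / ma) *
            (lasserre r Khat what (fun x => MvPolynomial.eval (fun i => x i) g) - F a) := by
  obtain ⟨-, hwpos, hwint, -⟩ := hw
  obtain ⟨-, hwhpos, hwhint, -⟩ := hwhat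
  have hFc : Continuous F := (funext hF : F = _) ▸ continuous_eval_euclidean f
  set ε := min ε₁ ε₂
  have hε : 0 < ε := lt_min hε₁ hε₂
  have hsimε : Khat ∩ closedBall a ε ⊆ K := fun x hx =>
    (hsim.symm.subset ⟨closedBall_subset_closedBall (min_le_left _ _) hx.2, hx.1⟩).2
  obtain ⟨M, hM⟩ := hKhc.exists_bound_of_continuousOn
    (hFc.sub continuous_const : Continuous fun x => F x - F a).continuousOn
  have hM0 : 0 ≤ M := by simpa using hM a (hsub ha)
  have hwh0 := hKhconv.ae_restrict_of_forall_mem_interior volume fun x hx => (hwhpos x hx).le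
  obtain ⟨q₀, hq₀, hc₀, hconc⟩ := exists_isSOS_setIntegral_dist_sq_le hKhc hwhpos hwhint hwh0
    (hKhconv.closure_interior_eq_closure_of_nonempty_interior hKhi ▸ subset_closure (hsub ha))
    (half_pos hε)
  set c := (6 * M + 1) / ε ^ 2
  obtain ⟨hgm, hgδ, hg₀⟩ := add_mul_dist_sq_bounds hKhc hFc hε.le hM0 (c := c)
    (div_mul_cancel₀ _ (by positivity)) (fun x hx => by simpa using hM x hx)
    (fun x hx => hmin x (hsimε hx))
    (hwhint.continuousOn_mul (continuous_eval_euclidean q₀).continuousOn hKhc)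
    (hwh0.mono fun x hx => mul_nonneg (hq₀.eval_nonneg _) hx) hconc
  have hg : ∀ x : EuclideanSpace ℝ (Fin n),
      MvPolynomial.eval (fun i => x i) (f + MvPolynomial.C c * sqDistPoly a) =
        F x + c * dist x a ^ 2 := by simp [hF, eval_sqDistPoly]
  refine ⟨f + MvPolynomial.C c * sqDistPoly a, by simp [hg], fun x _ => ?_,
    fun x hx => (hg x).symm ▸ hgm x hx, q₀.totalDegree, fun r hr => ?_⟩
  · rw [hg]
    exact le_add_of_nonneg_right (by positivity)
  simp only [hg]
  exact lasserre_sub_le_two_div_mul hsub hKc hKhc measurableSet_closedBall hsimε hwint hwhint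
    (hKconv.ae_restrict_of_forall_mem_interior volume fun x hx => (hwpos x hx).le) hwh0
    (hKconv.ae_restrict_of_forall_mem_interior volume hdom) hma
    (hKconv.ae_restrict_of_forall_mem_interior volume fun x hx hxB =>
      hloc x ⟨closedBall_subset_closedBall (min_le_right _ _) hxB, hx⟩)
    (by fun_prop) hgm (by positivity) hgδ hq₀ (by omega) hc₀ hg₀

/-- Proposition (local similarity): if the convex bodies `K ⊆ K̂` locally coincide at a
global minimizer `a` of the polynomial `f` on `K`, the weight `ŵ` on `K̂` dominates the
weight `w` on `K`, and `m_a ŵ ≤ w` near `a`, then `f` has a polynomial upper estimator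
`g`, exact at `a` and with `g ≥ f(a)` on `K̂`, such that the Lasserre bounds satisfy
`g^{(r)}_{K,w} - f(a) ≤ (2/m_a) (g^{(r)}_{K̂,ŵ} - f(a))` for all `r` large enough. -/
theorem stmt9 {n : ℕ}
    (K Khat : Set (EuclideanSpace ℝ (Fin n))) (hsub : K ⊆ Khat)
    (hKc : IsCompact K) (hKconv : Convex ℝ K) (hKi : (interior K).Nonempty)
    (hKhc : IsCompact Khat) (hKhconv : Convex ℝ Khat) (hKhi : (interior Khat).Nonempty)
    (f : MvPolynomial (Fin n) ℝ)
    (F : EuclideanSpace ℝ (Fin n) → ℝ)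
    (hF : ∀ x : EuclideanSpace ℝ (Fin n), F x = MvPolynomial.eval (fun i => x i) f)
    (a : EuclideanSpace ℝ (Fin n)) (ha : a ∈ K)
    (hmin : ∀ x ∈ K, F a ≤ F x)
    (ε₁ : ℝ) (hε₁ : 0 < ε₁)
    (hsim : Metric.closedBall a ε₁ ∩ K = Metric.closedBall a ε₁ ∩ Khat)
    (w what : EuclideanSpace ℝ (Fin n) → ℝ)
    (hw : IsWeightFn K w) (hwhat : IsWeightFn Khat what)
    (hdom : ∀ x ∈ interior K, w x ≤ what x)
    (ma ε₂ : ℝ) (hma : 0 < ma) (hε₂ : 0 < ε₂)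
    (hloc : ∀ x ∈ Metric.closedBall a ε₂ ∩ interior K, ma * what x ≤ w x) :
    ∃ g : MvPolynomial (Fin n) ℝ,
      MvPolynomial.eval (fun i => a i) g = F a ∧
      (∀ x ∈ Khat, F x ≤ MvPolynomial.eval (fun i => x i) g) ∧
      (∀ x ∈ Khat, F a ≤ MvPolynomial.eval (fun i => x i) g) ∧
      ∃ r₀ : ℕ, ∀ r : ℕ, r₀ ≤ r →
        lasserre r K w (fun x => MvPolynomial.eval (fun i => x i) g) - F a ≤
          (2 / ma) *
            (lasserre r Khat what (fun x => MvPolynomial.eval (fun i => x i) g) - F a) :=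
  stmt9_general K Khat hsub hKc hKconv hKhc hKhconv hKhi f F hF a ha hmin ε₁ hε₁ hsim w what hw
    hwhat hdom ma ε₂ hma hε₂ hloc
end
end

section
/- Let K ⊆ ℝⁿ be a compact set with nonempty interior equipped with the Lebesgue measure (weight w ≡ 1), let f be an n-variate real polynomial, and let φ : ℝⁿ → ℝⁿ, φ(x) = Ux + c, be a nonsingular affine transformation (U invertible). Set g := f ∘ φ⁻¹. Then for every r ∈ ℕ: f^{(r)}_{K} − min_{x∈K} f(x) = g^{(r)}_{φ(K)} − min_{y∈φ(K)} g(y). -/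
/-! Pulling a feasible density `q` on `K` back along the affine bijection `e`, and dividing by
`|det e|`, gives a feasible density on `e '' K` with the same objective value: the change of
variables formula turns both integrals into the original ones, and substituting affine
polynomials preserves sums of squares and does not raise the total degree. Applying this to `e`
and `e⁻¹` shows that the two feasible sets of values coincide, while `f ∘ e⁻¹` takes on `e '' K`
exactly the values of `f` on `K`. -/

open MeasureTheory

noncomputable section

open MvPolynomial

theorem MvPolynomial.totalDegree_bind₁_le_mul {σ τ R : Type*} [CommSemiring R]
    {L : σ → MvPolynomial τ R} {d : ℕ} (hL : ∀ i, (L i).totalDegree ≤ d)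
    (q : MvPolynomial σ R) : (bind₁ L q).totalDegree ≤ q.totalDegree * d := by
  conv_lhs => rw [q.as_sum, map_sum]
  refine (totalDegree_finsetSum _ _).trans (Finset.sup_le fun v hv => ?_)
  rw [bind₁_monomial]
  refine (totalDegree_mul _ _).trans ?_
  rw [totalDegree_C, zero_add]
  calc (∏ i ∈ v.support, L i ^ v i).totalDegree
      ≤ ∑ i ∈ v.support, v i * d :=
        (totalDegree_finsetProd _ _).trans <| Finset.sum_le_sum fun i _ =>
          (totalDegree_pow _ _).trans (Nat.mul_le_mul_left _ (hL i))
    _ = (v.sum fun _ e => e) * d := by rw [Finsupp.sum, Finset.sum_mul]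
    _ ≤ q.totalDegree * d := Nat.mul_le_mul_right _ (le_totalDegree hv)

section SumsOfSquares

variable {m n : ℕ}

theorem IsSOS.bind₁ {q : MvPolynomial (Fin n) ℝ} (h : IsSOS q)
    (L : Fin n → MvPolynomial (Fin m) ℝ) : IsSOS (bind₁ L q) := by
  obtain ⟨k, p, rfl⟩ := h
  exact ⟨k, fun i => MvPolynomial.bind₁ L (p i), by simp⟩

theorem IsSOS.C_mul_s13 {q : MvPolynomial (Fin n) ℝ} (h : IsSOS q) {a : ℝ} (ha : 0 ≤ a) :
    IsSOS (C a * q) := by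
  obtain ⟨k, p, rfl⟩ := h
  refine ⟨k, fun i => C √a * p i, ?_⟩
  simp only [Finset.mul_sum, mul_pow, ← C_pow, Real.sq_sqrt ha]

end SumsOfSquares

section AffineSubstitution

variable {m n : ℕ}

def affineCoordPoly (A : EuclideanSpace ℝ (Fin m) →ᵃ[ℝ] EuclideanSpace ℝ (Fin n)) (i : Fin n) :
    MvPolynomial (Fin m) ℝ :=
  ∑ j, C (A.linear (EuclideanSpace.single j 1) i) * X j + C (A 0 i)

variable (A : EuclideanSpace ℝ (Fin m) →ᵃ[ℝ] EuclideanSpace ℝ (Fin n))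

theorem eval_affineCoordPoly (x : EuclideanSpace ℝ (Fin m)) (i : Fin n) :
    eval (fun j => x j) (affineCoordPoly A i) = A x i := by
  have hx : x = ∑ j, x j • EuclideanSpace.single j (1 : ℝ) := by
    simpa using ((EuclideanSpace.basisFun (Fin m) ℝ).sum_repr x).symm
  conv_rhs => rw [A.decomp, Pi.add_apply, hx, map_sum]
  simp [affineCoordPoly, mul_comm]

theorem totalDegree_affineCoordPoly_le (i : Fin n) : (affineCoordPoly A i).totalDegree ≤ 1 := by
  refine (totalDegree_add _ _).trans (max_le ?_ (by simp))
  refine (totalDegree_finsetSum _ _).trans (Finset.sup_le fun j _ => ?_)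
  exact (totalDegree_mul _ _).trans (by simp [totalDegree_X])

theorem eval_bind₁_affineCoordPoly (q : MvPolynomial (Fin n) ℝ) (x : EuclideanSpace ℝ (Fin m)) :
    eval (fun j => x j) (bind₁ (affineCoordPoly A) q) = eval (fun i => A x i) q := by
  simpa [eval_affineCoordPoly] using aeval_bind₁ (fun j => x j) (affineCoordPoly A) q

end AffineSubstitution

section ChangeOfVariables

variable {E F : Type*} [NormedAddCommGroup E] [NormedSpace ℝ E] [FiniteDimensional ℝ E]
  [MeasurableSpace E] [BorelSpace E] (μ : Measure E) [μ.IsAddHaarMeasure]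
  [NormedAddCommGroup F] [NormedSpace ℝ F]

theorem AffineEquiv.measurableEmbedding (e : E ≃ᵃ[ℝ] E) : MeasurableEmbedding e :=
  (AffineEquiv.toContinuousAffineEquiv e).toHomeomorph.measurableEmbedding

theorem AffineEquiv.map_addHaar (e : E ≃ᵃ[ℝ] E) :
    μ.map e = ENNReal.ofReal |(LinearMap.det (e.linear : E →ₗ[ℝ] E))⁻¹| • μ := by
  have he : ⇑e = (· + e 0) ∘ (e.linear : E →ₗ[ℝ] E) := by
    funext x
    simpa using congrFun (e : E →ᵃ[ℝ] E).decomp x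
  rw [he, ← Measure.map_map (measurable_add_const _)
      (e.linear : E →ₗ[ℝ] E).continuous_of_finiteDimensional.measurable,
    Measure.map_linearMap_addHaar_eq_smul_addHaar μ (LinearEquiv.isUnit_det' _).ne_zero,
    Measure.map_smul, map_add_right_eq_self]

theorem AffineEquiv.setIntegral_image (e : E ≃ᵃ[ℝ] E) (s : Set E) (g : E → F) :
    ∫ y in e '' s, g y ∂μ = |LinearMap.det (e.linear : E →ₗ[ℝ] E)| • ∫ x in s, g (e x) ∂μ := by
  have hdet : LinearMap.det (e.linear : E →ₗ[ℝ] E) ≠ 0 := (LinearEquiv.isUnit_det' _).ne_zero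
  have key := e.measurableEmbedding.setIntegral_map (μ := μ) g (e '' s)
  rw [e.injective.preimage_image, e.map_addHaar μ, Measure.restrict_smul,
    integral_smul_measure] at key
  rw [← key, smul_smul, ENNReal.toReal_ofReal (abs_nonneg _), abs_inv,
    mul_inv_cancel₀ (abs_ne_zero.mpr hdet), one_smul]

end ChangeOfVariables

def lasserreValues {n : ℕ} (r : ℕ) (K : Set (EuclideanSpace ℝ (Fin n)))
    (w f : EuclideanSpace ℝ (Fin n) → ℝ) : Set ℝ :=
  { v : ℝ | ∃ q : MvPolynomial (Fin n) ℝ, IsSOS q ∧ q.totalDegree ≤ 2 * r ∧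
    (∫ x in K, MvPolynomial.eval (fun i => x i) q * w x) = 1 ∧
    v = ∫ x in K, f x * MvPolynomial.eval (fun i => x i) q * w x }

section AffineInvariance

variable {n : ℕ} (r : ℕ) {K : Set (EuclideanSpace ℝ (Fin n))}
  {w f : EuclideanSpace ℝ (Fin n) → ℝ}

theorem lasserre_eq_sInf_lasserreValues :
    lasserre r K w f = sInf (lasserreValues r K w f) := rfl

theorem lasserreValues_subset_image (e : EuclideanSpace ℝ (Fin n) ≃ᵃ[ℝ] EuclideanSpace ℝ (Fin n)) :
    lasserreValues r K w f ⊆ lasserreValues r (e '' K) (w ∘ e.symm) (f ∘ e.symm) := by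
  rintro v ⟨q, hsos, hdeg, hmass, rfl⟩
  set D := |LinearMap.det (e.linear : EuclideanSpace ℝ (Fin n) →ₗ[ℝ] _)|
  have hD : D ≠ 0 := abs_ne_zero.mpr (LinearEquiv.isUnit_det' _).ne_zero
  set q' := C D⁻¹ * bind₁ (affineCoordPoly e.symm.toAffineMap) q
  have hq' : ∀ x, eval (fun i => e x i) q' = D⁻¹ * eval (fun i => x i) q := by
    intro x
    simp [q', eval_bind₁_affineCoordPoly]
  have htransport : ∀ h : EuclideanSpace ℝ (Fin n) → ℝ,
      ∫ y in e '' K, h (e.symm y) * eval (fun i => y i) q' * w (e.symm y) =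
        ∫ x in K, h x * eval (fun i => x i) q * w x := by
    intro h
    rw [e.setIntegral_image volume, smul_eq_mul]
    simp only [e.symm_apply_apply, hq']
    have hscale : ∀ x, h x * (D⁻¹ * eval (fun i => x i) q) * w x =
        D⁻¹ * (h x * eval (fun i => x i) q * w x) := fun x => by ring
    simp only [hscale, integral_const_mul]
    exact mul_inv_cancel_left₀ hD _
  refine ⟨q', (hsos.bind₁ _).C_mul_s13 (inv_nonneg.mpr (abs_nonneg _)), ?_, ?_, ?_⟩
  · refine (totalDegree_mul _ _).trans ?_
    rw [totalDegree_C, zero_add]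
    exact (totalDegree_bind₁_le_mul (totalDegree_affineCoordPoly_le _) q).trans
      (by rwa [mul_one])
  · simpa [hmass] using htransport 1
  · exact (htransport f).symm

theorem lasserreValues_image (e : EuclideanSpace ℝ (Fin n) ≃ᵃ[ℝ] EuclideanSpace ℝ (Fin n)) :
    lasserreValues r (e '' K) (w ∘ e.symm) (f ∘ e.symm) = lasserreValues r K w f := by
  refine Set.Subset.antisymm ?_ (lasserreValues_subset_image r e)
  simpa [Set.image_image, Function.comp_def] using
    lasserreValues_subset_image r e.symm (K := e '' K) (w := w ∘ e.symm) (f := f ∘ e.symm)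

theorem lasserreError_image (e : EuclideanSpace ℝ (Fin n) ≃ᵃ[ℝ] EuclideanSpace ℝ (Fin n)) :
    lasserreError r (e '' K) (w ∘ e.symm) (f ∘ e.symm) = lasserreError r K w f := by
  simp only [lasserreError, lasserre_eq_sInf_lasserreValues, lasserreValues_image,
    Set.image_image, Function.comp_apply, e.symm_apply_apply]

end AffineInvariance

theorem stmt13_general {n : ℕ}
    (K : Set (EuclideanSpace ℝ (Fin n)))
    (F : EuclideanSpace ℝ (Fin n) → ℝ)
    (U : EuclideanSpace ℝ (Fin n) ≃ₗ[ℝ] EuclideanSpace ℝ (Fin n))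
    (c : EuclideanSpace ℝ (Fin n))
    (φ : EuclideanSpace ℝ (Fin n) → EuclideanSpace ℝ (Fin n))
    (hφ : ∀ x, φ x = U x + c)
    (G : EuclideanSpace ℝ (Fin n) → ℝ)
    (hG : ∀ y, G y = F (U.symm (y - c))) :
    ∀ r : ℕ,
      lasserre r K (fun _ => 1) F - sInf (F '' K) =
        lasserre r (φ '' K) (fun _ => 1) G - sInf (G '' (φ '' K)) := by
  intro r
  let e := U.toAffineEquiv.trans (AffineEquiv.constVAdd ℝ _ c)
  have hφe : φ = e := funext fun x => (hφ x).trans (add_comm _ _)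
  have hGe : G = F ∘ e.symm := funext fun y => by
    rw [hG, Function.comp_apply, e.symm_apply_eq.mpr]
    simp [e]
  rw [hφe, hGe]
  exact (lasserreError_image r e).symm

/-- Lemma (affine invariance): for a nonsingular affine transformation
`φ(x) = U x + c` of `ℝⁿ` and `g := f ∘ φ⁻¹`, the Lasserre errors of `f` on `K` and of
`g` on `φ(K)` (both w.r.t. the Lebesgue measure) coincide for every order `r`. -/
theorem stmt13 {n : ℕ}
    (K : Set (EuclideanSpace ℝ (Fin n)))
    (hKc : IsCompact K) (hKi : (interior K).Nonempty)
    (f : MvPolynomial (Fin n) ℝ)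
    (F : EuclideanSpace ℝ (Fin n) → ℝ)
    (hF : ∀ x : EuclideanSpace ℝ (Fin n), F x = MvPolynomial.eval (fun i => x i) f)
    (U : EuclideanSpace ℝ (Fin n) ≃ₗ[ℝ] EuclideanSpace ℝ (Fin n))
    (c : EuclideanSpace ℝ (Fin n))
    (φ : EuclideanSpace ℝ (Fin n) → EuclideanSpace ℝ (Fin n))
    (hφ : ∀ x, φ x = U x + c)
    (G : EuclideanSpace ℝ (Fin n) → ℝ)
    (hG : ∀ y, G y = F (U.symm (y - c))) :
    ∀ r : ℕ,
      lasserre r K (fun _ => 1) F - sInf (F '' K) =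
        lasserre r (φ '' K) (fun _ => 1) G - sInf (G '' (φ '' K)) :=
  stmt13_general K F U c φ hφ G hG
end
end

section
/- Let ρ > 0, c ∈ ℝⁿ, and let f ∈ C²(ℝⁿ, ℝ). Assume a ∈ ∂B_ρ(c) (i.e. ‖a − c‖ = ρ) is a global minimizer of f on the closed ball B_ρ(c). Then there exists an affine (degree at most 1) polynomial g : ℝⁿ → ℝ with g(a) = f(a) and f(x) ≤ g(x) for all x ∈ B_ρ(c). -/
open scoped RealInnerProductSpace

/-!
On a compact convex set a `C²` function lies below its tangent plane at `a` plus `K ‖x - a‖²`.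
If `a` is on the boundary of the ball `B_ρ(c)`, then on the ball
`‖x - a‖² ≤ 2 ⟪a - c, a - x⟫`, whose right-hand side is affine in `x` and vanishes at `a`,
so the quadratic error term can be traded for an affine one.
-/

open Metric

section Taylor

variable {E F : Type*} [NormedAddCommGroup E] [NormedSpace ℝ E]
  [NormedAddCommGroup F] [NormedSpace ℝ F] {f : E → F} {s : Set E}

theorem Convex.norm_image_sub_sub_fderiv_le {K : ℝ} (hs : Convex ℝ s)
    (hf : Differentiable ℝ f) (hf' : Differentiable ℝ (fderiv ℝ f))
    (bound : ∀ z ∈ s, ‖fderiv ℝ (fderiv ℝ f) z‖ ≤ K) {a x : E} (ha : a ∈ s) (hx : x ∈ s) :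
    ‖f x - f a - fderiv ℝ f a (x - a)‖ ≤ K * ‖x - a‖ ^ 2 := by
  have hK : 0 ≤ K := (norm_nonneg (fderiv ℝ (fderiv ℝ f) a)).trans (bound a ha)
  -- Apply the mean value theorem twice, the second time on the part of `s` closer to `a` than `x`.
  set t := s ∩ closedBall a ‖x - a‖
  have hderiv : ∀ z ∈ t, ‖fderiv ℝ f z - fderiv ℝ f a‖ ≤ K * ‖x - a‖ := fun z hz =>
    (hs.norm_image_sub_le_of_norm_fderiv_le (fun y _ => hf' y) bound ha hz.1).trans
      (mul_le_mul_of_nonneg_left (mem_closedBall_iff_norm.mp hz.2) hK)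
  calc ‖f x - f a - fderiv ℝ f a (x - a)‖ ≤ K * ‖x - a‖ * ‖x - a‖ :=
        (hs.inter (convex_closedBall _ _)).norm_image_sub_le_of_norm_fderiv_le'
          (fun z _ => hf z) hderiv ⟨ha, mem_closedBall_self (norm_nonneg _)⟩
          ⟨hx, mem_closedBall_iff_norm.mpr le_rfl⟩
    _ = K * ‖x - a‖ ^ 2 := by ring

theorem ContDiff.exists_norm_image_sub_sub_fderiv_le (hf : ContDiff ℝ 2 f) (hs : IsCompact s)
    (hsc : Convex ℝ s) :
    ∃ K, 0 ≤ K ∧ ∀ a ∈ s, ∀ x ∈ s, ‖f x - f a - fderiv ℝ f a (x - a)‖ ≤ K * ‖x - a‖ ^ 2 := by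
  have hf' : ContDiff ℝ 1 (fderiv ℝ f) := hf.fderiv_right (by norm_num)
  obtain ⟨K, hK⟩ := hs.exists_bound_of_continuousOn
    (hf'.continuous_fderiv one_ne_zero).continuousOn
  exact ⟨max K 0, le_max_right _ _, fun a ha x hx =>
    hsc.norm_image_sub_sub_fderiv_le (hf.differentiable (by norm_num))
      (hf'.differentiable one_ne_zero) (fun z hz => (hK z hz).trans (le_max_left _ _)) ha hx⟩

end Taylor

section InnerProduct

variable {E : Type*} [NormedAddCommGroup E] [InnerProductSpace ℝ E]

theorem sq_norm_sub_le_two_mul_inner_of_norm_sub_le {x a c : E} (h : ‖x - c‖ ≤ ‖a - c‖) :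
    ‖x - a‖ ^ 2 ≤ 2 * ⟪a - c, a - x⟫ := by
  have hexp := norm_add_sq_real (x - a) (a - c)
  rw [sub_add_sub_cancel] at hexp
  have hinner : ⟪a - c, a - x⟫ = -⟪x - a, a - c⟫ := by
    rw [real_inner_comm, ← inner_neg_left, neg_sub]
  nlinarith [norm_nonneg (x - c), norm_nonneg (a - c)]

theorem ContDiff.exists_affine_majorant_closedBall [ProperSpace E] {f : E → ℝ}
    (hf : ContDiff ℝ 2 f) {a c : E} {ρ : ℝ} (ha : ‖a - c‖ = ρ) :
    ∃ (L : StrongDual ℝ E) (b : ℝ), f a = L a + b ∧ ∀ x ∈ closedBall c ρ, f x ≤ L x + b := by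
  obtain ⟨K, hK, htaylor⟩ :=
    hf.exists_norm_image_sub_sub_fderiv_le (isCompact_closedBall c ρ) (convex_closedBall c ρ)
  have haB : a ∈ closedBall c ρ := mem_closedBall_iff_norm.mpr ha.le
  set L : StrongDual ℝ E := fderiv ℝ f a - (2 * K) • innerSL ℝ (a - c)
  refine ⟨L, f a - L a, by ring, fun x hx => ?_⟩
  have hquad : f x - f a - fderiv ℝ f a (x - a) ≤ K * ‖x - a‖ ^ 2 :=
    (le_abs_self _).trans (htaylor a haB x hx)
  have hgeom : ‖x - a‖ ^ 2 ≤ 2 * ⟪a - c, a - x⟫ :=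
    sq_norm_sub_le_two_mul_inner_of_norm_sub_le (ha ▸ mem_closedBall_iff_norm.mp hx)
  have hL : L x - L a = fderiv ℝ f a (x - a) + 2 * K * ⟪a - c, a - x⟫ := by
    simp only [L, sub_apply, smul_apply, innerSL_apply_apply, map_sub, inner_sub_left,
      inner_sub_right, smul_eq_mul]
    ring
  linarith [mul_le_mul_of_nonneg_left hgeom hK]

end InnerProduct

theorem stmt14_general {n : ℕ} (ρ : ℝ)
    (c : EuclideanSpace ℝ (Fin n))
    (f : EuclideanSpace ℝ (Fin n) → ℝ) (hf : ContDiff ℝ 2 f)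
    (a : EuclideanSpace ℝ (Fin n)) (ha : ‖a - c‖ = ρ) :
    ∃ (v : EuclideanSpace ℝ (Fin n)) (b : ℝ),
      f a = ⟪v, a⟫ + b ∧
      ∀ x ∈ Metric.closedBall c ρ, f x ≤ ⟪v, x⟫ + b := by
  obtain ⟨L, b, hfa, hle⟩ := hf.exists_affine_majorant_closedBall ha
  refine ⟨(InnerProductSpace.toDual ℝ _).symm L, b, ?_, fun x hx => ?_⟩
  · rwa [InnerProductSpace.toDual_symm_apply]
  · rw [InnerProductSpace.toDual_symm_apply]
    exact hle x hx

/-- Lemma: if `f ∈ C²(ℝⁿ,ℝ)` attains its global minimum on the closed ball `B_ρ(c)` at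
a boundary point `a` (with `‖a - c‖ = ρ`), then there is an affine polynomial
`g(x) = ⟪v, x⟫ + b` with `g(a) = f(a)` and `f ≤ g` on `B_ρ(c)`. -/
theorem stmt14 {n : ℕ} (ρ : ℝ) (hρ : 0 < ρ)
    (c : EuclideanSpace ℝ (Fin n))
    (f : EuclideanSpace ℝ (Fin n) → ℝ) (hf : ContDiff ℝ 2 f)
    (a : EuclideanSpace ℝ (Fin n)) (ha : ‖a - c‖ = ρ)
    (hmin : ∀ x ∈ Metric.closedBall c ρ, f a ≤ f x) :
    ∃ (v : EuclideanSpace ℝ (Fin n)) (b : ℝ),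
      f a = ⟪v, a⟫ + b ∧
      ∀ x ∈ Metric.closedBall c ρ, f x ≤ ⟪v, x⟫ + b :=
  stmt14_general ρ c f hf a ha
end

section
/- Let r ∈ ℕ and h ∈ (0, 1), and define the needle polynomial K^h_r(t) := T_r(1 + h² − t²)² / T_r(1 + h²)², where T_r is the degree-r Chebyshev polynomial of the first kind. Then: (i) K^h_r(0) = 1; (ii) 0 ≤ K^h_r(t) ≤ 1 for all t ∈ [−1, 1]; (iii) K^h_r(t) ≤ 4 e^{−rh/2} for all t ∈ [−1, 1] with |t| ≥ h. -/
open Polynomial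

lemma T_real_cosh (s : ℝ) (n : ℤ) :
    (Polynomial.Chebyshev.T ℝ n).eval (Real.cosh s) = Real.cosh (n * s) := by
  have key := Polynomial.Chebyshev.T_complex_cos ((s : ℂ) * Complex.I) n
  rw [Complex.cos_mul_I] at key
  have h2 : (n : ℂ) * ((s : ℂ) * Complex.I) = ((n * s : ℝ) : ℂ) * Complex.I := by
    push_cast; ring
  rw [h2, Complex.cos_mul_I, ← Complex.ofReal_cosh, ← Complex.ofReal_cosh,
    ← Polynomial.Chebyshev.complex_ofReal_eval_T] at key
  exact_mod_cast key

lemma cosh_log_eq (x : ℝ) (hx : 1 ≤ x) :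
    Real.cosh (Real.log (x + Real.sqrt (x ^ 2 - 1))) = x := by
  have hs : Real.sqrt (x ^ 2 - 1) ^ 2 = x ^ 2 - 1 := Real.sq_sqrt (by nlinarith)
  have hsn : 0 ≤ Real.sqrt (x ^ 2 - 1) := Real.sqrt_nonneg _
  have hy : 0 < x + Real.sqrt (x ^ 2 - 1) := by nlinarith
  rw [Real.cosh_eq, Real.exp_log hy, Real.exp_neg, Real.exp_log hy]
  field_simp
  nlinarith

lemma T_eval_ge_one (x : ℝ) (hx : 1 ≤ x) (n : ℤ) :
    (Polynomial.Chebyshev.T ℝ n).eval x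
      = Real.cosh (n * Real.log (x + Real.sqrt (x ^ 2 - 1))) := by
  conv_lhs => rw [← cosh_log_eq x hx]
  exact T_real_cosh _ n

set_option maxHeartbeats 800000 in
/-- Theorem (needle polynomial properties): for `r ∈ ℕ`, `h ∈ (0,1)`, the needle
polynomial `K^h_r(t) = T_r(1 + h² - t²)² / T_r(1 + h²)²` satisfies `K^h_r(0) = 1`,
`0 ≤ K^h_r ≤ 1` on `[-1,1]`, and `K^h_r(t) ≤ 4 e^{-rh/2}` for `t ∈ [-1,1]` with
`|t| ≥ h`. -/
theorem stmt16 (r : ℕ) (h : ℝ) (hh : h ∈ Set.Ioo (0 : ℝ) 1)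
    (needle : ℝ → ℝ)
    (hneedle : ∀ t : ℝ, needle t =
      (Polynomial.eval (1 + h ^ 2 - t ^ 2) (Polynomial.Chebyshev.T ℝ (r : ℤ))) ^ 2 /
        (Polynomial.eval (1 + h ^ 2) (Polynomial.Chebyshev.T ℝ (r : ℤ))) ^ 2) :
    needle 0 = 1 ∧
    (∀ t ∈ Set.Icc (-1 : ℝ) 1, 0 ≤ needle t ∧ needle t ≤ 1) ∧
    (∀ t ∈ Set.Icc (-1 : ℝ) 1, h ≤ |t| →
      needle t ≤ 4 * Real.exp (-(1 / 2) * (r * h))) := by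
  obtain ⟨hh0, hh1⟩ := hh
  set x : ℝ := 1 + h ^ 2 with hxdef
  have hx1 : 1 ≤ x := by nlinarith
  set b : ℝ := Real.log (x + Real.sqrt (x ^ 2 - 1)) with hbdef
  have hb0 : 0 ≤ b := Real.log_nonneg (by nlinarith [Real.sqrt_nonneg (x ^ 2 - 1)])
  set D : ℝ := Polynomial.eval x (Polynomial.Chebyshev.T ℝ (r : ℤ)) with hDdef
  have hDc : D = Real.cosh ((r : ℝ) * b) := by
    rw [hDdef, T_eval_ge_one x hx1 (r : ℤ)]
    norm_cast
  have hD1 : 1 ≤ D := hDc ▸ Real.one_le_cosh _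
  have hD0 : 0 < D := lt_of_lt_of_le one_pos hD1
  -- key bound: |T_r(u)| ≤ D for u ∈ [-1, x]
  have key : ∀ u : ℝ, -1 ≤ u → u ≤ x →
      |Polynomial.eval u (Polynomial.Chebyshev.T ℝ (r : ℤ))| ≤ D := by
    intro u hu1 hu2
    rcases le_or_gt u 1 with hu3 | hu3
    · have hc : Real.cos (Real.arccos u) = u := Real.cos_arccos hu1 hu3
      have heq : Polynomial.eval u (Polynomial.Chebyshev.T ℝ (r : ℤ))
          = Real.cos ((r : ℤ) * Real.arccos u) := by
        conv_lhs => rw [← hc]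
        exact Polynomial.Chebyshev.T_real_cos _ _
      rw [heq]
      exact le_trans (Real.abs_cos_le_one _) hD1
    · have hu1' : 1 ≤ u := hu3.le
      set a : ℝ := Real.log (u + Real.sqrt (u ^ 2 - 1)) with hadef
      have ha0 : 0 ≤ a := Real.log_nonneg (by nlinarith [Real.sqrt_nonneg (u ^ 2 - 1)])
      have hab : a ≤ b := by
        apply Real.log_le_log (by nlinarith [Real.sqrt_nonneg (u ^ 2 - 1)])
        have : Real.sqrt (u ^ 2 - 1) ≤ Real.sqrt (x ^ 2 - 1) :=
          Real.sqrt_le_sqrt (by nlinarith)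
        linarith
      have heval : Polynomial.eval u (Polynomial.Chebyshev.T ℝ (r : ℤ))
          = Real.cosh ((r : ℝ) * a) := by
        rw [T_eval_ge_one u hu1' (r : ℤ)]; norm_cast
      rw [heval, abs_of_nonneg (Real.cosh_pos _).le, hDc, Real.cosh_le_cosh,
        abs_of_nonneg (by positivity), abs_of_nonneg (by positivity)]
      exact mul_le_mul_of_nonneg_left hab (Nat.cast_nonneg r)
  refine ⟨?_, ?_, ?_⟩
  · rw [hneedle 0]
    norm_num
    exact div_self (by positivity)
  · intro t ht
    rw [Set.mem_Icc] at ht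
    have ht2 : t ^ 2 ≤ 1 := by nlinarith [ht.1, ht.2]
    have hK := key (x - t ^ 2) (by nlinarith) (by nlinarith)
    constructor
    · rw [hneedle t]; positivity
    · rw [hneedle t, div_le_one (by positivity)]
      calc Polynomial.eval (x - t ^ 2) (Polynomial.Chebyshev.T ℝ (r : ℤ)) ^ 2
          = |Polynomial.eval (x - t ^ 2) (Polynomial.Chebyshev.T ℝ (r : ℤ))| ^ 2 :=
            (sq_abs _).symm
        _ ≤ D ^ 2 := by
            nlinarith [abs_nonneg (Polynomial.eval (x - t ^ 2) (Polynomial.Chebyshev.T ℝ (r : ℤ)))]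
  · intro t ht hth
    rw [Set.mem_Icc] at ht
    have ht2 : t ^ 2 ≤ 1 := by nlinarith [ht.1, ht.2]
    have hht2 : h ^ 2 ≤ t ^ 2 := by
      have := pow_le_pow_left₀ hh0.le hth 2
      rwa [sq_abs] at this
    have hu1 : -1 ≤ x - t ^ 2 := by nlinarith
    have hu2 : x - t ^ 2 ≤ 1 := by simp only [hxdef]; nlinarith
    -- |T(u)| ≤ 1
    have hTu : |Polynomial.eval (x - t ^ 2) (Polynomial.Chebyshev.T ℝ (r : ℤ))| ≤ 1 := by
      have hc : Real.cos (Real.arccos (x - t ^ 2)) = x - t ^ 2 := Real.cos_arccos hu1 hu2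
      have heq : Polynomial.eval (x - t ^ 2) (Polynomial.Chebyshev.T ℝ (r : ℤ))
          = Real.cos ((r : ℤ) * Real.arccos (x - t ^ 2)) := by
        conv_lhs => rw [← hc]
        exact Polynomial.Chebyshev.T_real_cos _ _
      rw [heq]; exact Real.abs_cos_le_one _
    -- lower bound b ≥ h/4
    have hsqrt2 : (1.4 : ℝ) ≤ Real.sqrt 2 := by
      nlinarith [Real.sq_sqrt (show (0:ℝ) ≤ 2 by norm_num), Real.sqrt_nonneg 2]
    have hs2 : Real.sqrt 2 * h ≤ Real.sqrt (x ^ 2 - 1) := by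
      have h1 : Real.sqrt (2 * h ^ 2) ≤ Real.sqrt (x ^ 2 - 1) :=
        Real.sqrt_le_sqrt (by nlinarith)
      have h2 : Real.sqrt (2 * h ^ 2) = Real.sqrt 2 * h := by
        rw [Real.sqrt_mul (by norm_num), Real.sqrt_sq hh0.le]
      linarith [h2 ▸ h1]
    have hbh : h / 4 ≤ b := by
      rw [hbdef, Real.le_log_iff_exp_le (by nlinarith [Real.sqrt_nonneg (x ^ 2 - 1)])]
      have e1 : 1 - h / 4 ≤ Real.exp (-(h / 4)) := by
        have := Real.add_one_le_exp (-(h / 4)); linarith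
      have e2 : Real.exp (h / 4) * (1 - h / 4) ≤ 1 := by
        calc Real.exp (h / 4) * (1 - h / 4)
            ≤ Real.exp (h / 4) * Real.exp (-(h / 4)) :=
              mul_le_mul_of_nonneg_left e1 (Real.exp_pos _).le
          _ = 1 := by rw [← Real.exp_add]; norm_num
      have hpos : (0:ℝ) < 1 - h / 4 := by linarith
      have hs1 : Real.sqrt 2 * h ^ 2 ≤ Real.sqrt 2 * h := by
        have : h ^ 2 ≤ h := by nlinarith
        exact mul_le_mul_of_nonneg_left this (Real.sqrt_nonneg 2)
      have key14 : (1:ℝ) ≤ (1 + Real.sqrt 2 * h) * (1 - h / 4) := by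
        have := mul_le_mul_of_nonneg_right hsqrt2 hh0.le
        nlinarith
      have e3 : Real.exp (h / 4) ≤ 1 + Real.sqrt 2 * h :=
        le_of_mul_le_mul_right (e2.trans key14) hpos
      have hfin : 1 + Real.sqrt 2 * h ≤ x + Real.sqrt (x ^ 2 - 1) := by
        have : (1:ℝ) + 0 ≤ x := by simp only [hxdef]; nlinarith
        linarith
      linarith
    -- lower bound on D
    have hDlb : Real.exp ((r : ℝ) * h / 4) ≤ 2 * D := by
      rw [hDc, Real.cosh_eq]
      have hle : Real.exp ((r : ℝ) * h / 4) ≤ Real.exp ((r : ℝ) * b) := by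
        apply Real.exp_le_exp.2
        calc (r : ℝ) * h / 4 = (r : ℝ) * (h / 4) := by ring
          _ ≤ (r : ℝ) * b := mul_le_mul_of_nonneg_left hbh (Nat.cast_nonneg r)
      nlinarith [Real.exp_pos (-((r : ℝ) * b))]
    have hE : Real.exp ((r : ℝ) * h / 2) ≤ 4 * D ^ 2 := by
      have hm := mul_le_mul hDlb hDlb (Real.exp_pos _).le (by positivity)
      rw [← Real.exp_add] at hm
      calc Real.exp ((r : ℝ) * h / 2)
          = Real.exp ((r : ℝ) * h / 4 + (r : ℝ) * h / 4) := by ring_nf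
        _ ≤ 2 * D * (2 * D) := hm
        _ = 4 * D ^ 2 := by ring
    rw [hneedle t]
    have h1 : Polynomial.eval (x - t ^ 2) (Polynomial.Chebyshev.T ℝ (r : ℤ)) ^ 2 ≤ 1 := by
      calc Polynomial.eval (x - t ^ 2) (Polynomial.Chebyshev.T ℝ (r : ℤ)) ^ 2
          = |Polynomial.eval (x - t ^ 2) (Polynomial.Chebyshev.T ℝ (r : ℤ))| ^ 2 :=
            (sq_abs _).symm
        _ ≤ 1 := by
            nlinarith [abs_nonneg (Polynomial.eval (x - t ^ 2) (Polynomial.Chebyshev.T ℝ (r : ℤ)))]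
    have hEpos : 0 < Real.exp ((r : ℝ) * h / 2) := Real.exp_pos _
    calc Polynomial.eval (x - t ^ 2) (Polynomial.Chebyshev.T ℝ (r : ℤ)) ^ 2 / D ^ 2
        ≤ 1 / D ^ 2 := by gcongr
      _ ≤ 4 / Real.exp ((r : ℝ) * h / 2) := by
          rw [div_le_div_iff₀ (by positivity) hEpos]
          linarith
      _ = 4 * Real.exp (-(1 / 2) * ((r : ℕ) * h)) := by
          rw [show (-(1 / 2) * ((r : ℕ) * h) : ℝ) = -((r : ℝ) * h / 2) by push_cast; ring,
            Real.exp_neg, div_eq_mul_inv]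
end

section
/- Let r ∈ ℕ and h ∈ (0, 1), and define the half-needle polynomial k^h_r(t) := T_{2r}((2 + h − 2t)/(2 − h))² / T_{2r}((2 + h)/(2 − h))², where T_{2r} is the degree-2r Chebyshev polynomial of the first kind. Then: (i) k^h_r(0) = 1; (ii) 0 ≤ k^h_r(t) ≤ 1 for all t ∈ [0, 1]; (iii) k^h_r(t) ≤ 4 e^{−r√h/2} for all t ∈ [0, 1] with t ≥ h. -/
/-!
On `[-1, 1]` Chebyshev polynomials are bounded by `1`, and on `[1, ∞)` the identity
`T_n (cosh θ) = cosh (n θ)` shows that `T_n` is increasing and `≥ 1`. The substitution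
`x = (2 + h - 2t) / (2 - h)` maps `[0, 1]` into `[-a, a]`, where `a = (2 + h) / (2 - h)` is the
image of `t = 0`, and maps `[h, 1]` into `[-1, 1]`. Finally `cosh √h ≤ exp (h / 2) ≤ a`, so
`T_{2r}(a) ≥ cosh (2r √h) ≥ exp (2r √h) / 2`, which gives the decay `4 exp (-4r √h)` on `[h, 1]`.
-/

open Polynomial Real

namespace Polynomial.Chebyshev

theorem eval_T_real_of_one_le (n : ℤ) {x : ℝ} (hx : 1 ≤ x) :
    (T ℝ n).eval x = cosh (n * arcosh x) := by
  rw [← T_real_cosh, cosh_arcosh hx]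

theorem monotoneOn_eval_T_real (n : ℤ) : MonotoneOn (fun x => (T ℝ n).eval x) (Set.Ici 1) := by
  intro x (hx : 1 ≤ x) y (hy : 1 ≤ y) hxy
  simp only [eval_T_real_of_one_le n hx, eval_T_real_of_one_le n hy, cosh_le_cosh, abs_mul,
    abs_of_nonneg (arcosh_nonneg hx), abs_of_nonneg (arcosh_nonneg hy)]
  gcongr
  exact (arcosh_le_arcosh (by linarith) (by linarith)).2 hxy

theorem abs_eval_T_real_le_eval (n : ℤ) {x a : ℝ} (ha : 1 ≤ a) (hxa : |x| ≤ a) :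
    |(T ℝ n).eval x| ≤ (T ℝ n).eval a := by
  rcases le_total |x| 1 with hx | hx
  · exact (abs_eval_T_real_le_one n hx).trans (one_le_eval_T_real n ha)
  · have h_even : |(T ℝ n).eval x| = |(T ℝ n).eval (|x|)| := by
      rcases abs_choice x with h | h <;> simp [h, T_eval_neg, abs_mul]
    rw [h_even, abs_of_nonneg (by linarith [one_le_eval_T_real n hx])]
    exact monotoneOn_eval_T_real n hx ha hxa

theorem exp_mul_le_two_mul_eval_T_real (n : ℕ) {θ x : ℝ} (hx : cosh θ ≤ x) :
    exp (n * θ) ≤ 2 * (T ℝ n).eval x :=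
  calc exp (n * θ) ≤ 2 * cosh (n * θ) := by
        rw [cosh_eq]
        linarith [exp_pos (-(n * θ))]
    _ = 2 * (T ℝ n).eval (cosh θ) := by
        rw [T_real_cosh]
        norm_cast
    _ ≤ 2 * (T ℝ n).eval x := by
        gcongr
        exact monotoneOn_eval_T_real n (one_le_cosh θ) ((one_le_cosh θ).trans hx) hx

theorem one_div_sq_eval_T_real_le (n : ℕ) {θ x : ℝ} (hx : cosh θ ≤ x) :
    1 / (T ℝ n).eval x ^ 2 ≤ 4 * exp (-(2 * n * θ)) := by
  have h_exp := exp_mul_le_two_mul_eval_T_real n hx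
  have h_pos : 0 < exp (n * θ) := exp_pos _
  rw [show exp (-(2 * n * θ)) = 1 / exp (n * θ) ^ 2 by
    rw [exp_neg, ← exp_nat_mul]; push_cast; ring_nf]
  rw [mul_one_div, div_le_div_iff₀ (by nlinarith) (by positivity)]
  nlinarith

end Polynomial.Chebyshev

theorem Real.cosh_sqrt_le_div {h : ℝ} (h0 : 0 ≤ h) (h2 : h < 2) :
    cosh √h ≤ (2 + h) / (2 - h) :=
  calc cosh √h ≤ exp (h / 2) := by simpa [sq_sqrt h0] using cosh_le_exp_half_sq √h
    _ ≤ 1 / (1 - h / 2) := exp_bound_div_one_sub_of_interval (by positivity) (by linarith)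
    _ = 2 / (2 - h) := by field_simp
    _ ≤ (2 + h) / (2 - h) := by gcongr; linarith

/-- Theorem (half-needle polynomial properties): for `r ∈ ℕ`, `h ∈ (0,1)`, the
half-needle polynomial `k^h_r(t) = T_{2r}((2+h-2t)/(2-h))² / T_{2r}((2+h)/(2-h))²`
satisfies `k^h_r(0) = 1`, `0 ≤ k^h_r ≤ 1` on `[0,1]`, and `k^h_r(t) ≤ 4 e^{-r√h/2}`
for `t ∈ [0,1]` with `t ≥ h`. -/
theorem stmt17 (r : ℕ) (h : ℝ) (hh : h ∈ Set.Ioo (0 : ℝ) 1)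
    (halfneedle : ℝ → ℝ)
    (hhalfneedle : ∀ t : ℝ, halfneedle t =
      (Polynomial.eval ((2 + h - 2 * t) / (2 - h))
          (Polynomial.Chebyshev.T ℝ (2 * (r : ℤ)))) ^ 2 /
        (Polynomial.eval ((2 + h) / (2 - h))
          (Polynomial.Chebyshev.T ℝ (2 * (r : ℤ)))) ^ 2) :
    halfneedle 0 = 1 ∧
    (∀ t ∈ Set.Icc (0 : ℝ) 1, 0 ≤ halfneedle t ∧ halfneedle t ≤ 1) ∧
    (∀ t ∈ Set.Icc (0 : ℝ) 1, h ≤ t →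
      halfneedle t ≤ 4 * Real.exp (-(1 / 2) * (r * Real.sqrt h))) := by
  obtain ⟨h0, h1⟩ := hh
  set p := Chebyshev.T ℝ (2 * (r : ℤ))
  set a := (2 + h) / (2 - h)
  have ha : 1 ≤ a := (one_le_div (by linarith)).2 (by linarith)
  have hpa : 1 ≤ p.eval a := Chebyshev.one_le_eval_T_real _ ha
  have hx_le (t : ℝ) (ht : t ∈ Set.Icc (0 : ℝ) 1) : |(2 + h - 2 * t) / (2 - h)| ≤ a := by
    rw [abs_le, ← neg_div]
    constructor <;> apply div_le_div_of_nonneg_right <;> linarith [ht.1, ht.2]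
  refine ⟨?_, fun t ht => ⟨?_, ?_⟩, fun t ht hht => ?_⟩
  · rw [hhalfneedle, mul_zero, sub_zero]
    exact div_self (by positivity)
  · rw [hhalfneedle]
    positivity
  · rw [hhalfneedle, div_le_one (by positivity), sq_le_sq]
    exact (Chebyshev.abs_eval_T_real_le_eval _ ha (hx_le t ht)).trans (le_abs_self _)
  · have h_num : p.eval ((2 + h - 2 * t) / (2 - h)) ^ 2 ≤ 1 := by
      rw [sq_le_one_iff_abs_le_one]
      refine Chebyshev.abs_eval_T_real_le_one _ (abs_le.2 ⟨?_, ?_⟩)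
      · rw [le_div_iff₀ (by linarith)]; linarith [ht.2]
      · rw [div_le_one (by linarith)]; linarith
    calc halfneedle t ≤ 1 / p.eval a ^ 2 := by rw [hhalfneedle]; gcongr
      _ ≤ 4 * exp (-(2 * (2 * r : ℕ) * √h)) :=
        mod_cast Chebyshev.one_div_sq_eval_T_real_le (2 * r) (cosh_sqrt_le_div h0.le (by linarith))
      _ ≤ 4 * exp (-(1 / 2) * (r * √h)) := by
        gcongr
        push_cast
        nlinarith [show 0 ≤ r * √h by positivity]
end

section
/- For every r ∈ ℕ and every t ∈ [0, 1), the Chebyshev polynomial of the first kind satisfies T_r(1 + t) ≥ (1/2) e^{r √t · log(1 + √2)} ≥ (1/2) e^{r √t / 4}. -/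
open Polynomial

lemma cheb_eval18 (x : ℝ) (hx : 1 ≤ x) (n : ℕ) :
    Polynomial.eval x (Polynomial.Chebyshev.T ℝ (n : ℤ)) =
      ((x + Real.sqrt (x^2 - 1))^n + (x - Real.sqrt (x^2 - 1))^n) / 2 := by
  set s := Real.sqrt (x^2 - 1) with hs
  have hs2 : s^2 = x^2 - 1 := Real.sq_sqrt (by nlinarith)
  induction n using Nat.twoStepInduction with
  | zero => simp [Polynomial.Chebyshev.T_zero]
  | one => simp [Polynomial.Chebyshev.T_one]
  | more n ih1 ih2 =>
    rw [show ((n + 2 : ℕ) : ℤ) = (n : ℤ) + 2 by push_cast; ring,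
      Polynomial.Chebyshev.T_add_two]
    simp only [Polynomial.eval_sub, Polynomial.eval_mul, Polynomial.eval_ofNat,
      Polynomial.eval_X]
    rw [show ((n : ℤ) + 1) = ((n + 1 : ℕ) : ℤ) by push_cast; ring, ih2, ih1]
    linear_combination (-((x + s)^n + (x - s)^n)/2) * hs2

/-- Lemma: for every `r ∈ ℕ` and `t ∈ [0,1)`, the Chebyshev polynomial of the first
kind satisfies `T_r(1+t) ≥ (1/2) e^{r √t log(1+√2)} ≥ (1/2) e^{r √t / 4}`. -/
theorem stmt18 (r : ℕ) (t : ℝ) (ht : t ∈ Set.Ico (0 : ℝ) 1) :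
    (1 / 2) * Real.exp ((r : ℝ) * Real.sqrt t * Real.log (1 + Real.sqrt 2)) ≤
        Polynomial.eval (1 + t) (Polynomial.Chebyshev.T ℝ (r : ℤ)) ∧
      (1 / 2) * Real.exp ((r : ℝ) * Real.sqrt t / 4) ≤
        (1 / 2) * Real.exp ((r : ℝ) * Real.sqrt t * Real.log (1 + Real.sqrt 2)) := by
  obtain ⟨ht0, ht1⟩ := ht
  have h2 : (0:ℝ) ≤ 2 := by norm_num
  have hsqrt2 : (1:ℝ) ≤ Real.sqrt 2 := by
    rw [show (1:ℝ) = Real.sqrt 1 by simp]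
    exact Real.sqrt_le_sqrt (by norm_num)
  have hst : Real.sqrt t ≤ 1 := by
    rw [show (1:ℝ) = Real.sqrt 1 by simp]
    exact Real.sqrt_le_sqrt ht1.le
  have hst0 : 0 ≤ Real.sqrt t := Real.sqrt_nonneg t
  have hL : (1/4 : ℝ) ≤ Real.log (1 + Real.sqrt 2) := by
    rw [Real.le_log_iff_exp_le (by linarith)]
    have h1 : Real.exp (1/4 : ℝ) ≤ 4/3 := by
      have := Real.add_one_le_exp (-(1/4 : ℝ))
      have hpos := Real.exp_pos (-(1/4 : ℝ))
      rw [show Real.exp (1/4 : ℝ) = (Real.exp (-(1/4:ℝ)))⁻¹ by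
        rw [← Real.exp_neg]; norm_num]
      rw [inv_le_comm₀ hpos (by norm_num)]
      linarith
    linarith
  constructor
  · -- first inequality
    set x := 1 + t with hx
    have hx1 : (1:ℝ) ≤ x := by linarith
    rw [cheb_eval18 x hx1 r]
    set s := Real.sqrt (x^2 - 1) with hs
    have hs0 : 0 ≤ s := Real.sqrt_nonneg _
    have hb : 0 ≤ x - s := by
      have : s ≤ x := by
        have h := Real.sqrt_le_sqrt (show x^2 - 1 ≤ x^2 by linarith)
        rwa [Real.sqrt_sq (by linarith)] at h
      linarith
    have hbr : (0:ℝ) ≤ (x - s)^r := pow_nonneg hb r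
    have key : Real.exp ((r : ℝ) * Real.sqrt t * Real.log (1 + Real.sqrt 2)) ≤ (x + s)^r := by
      have h1 : Real.exp (Real.sqrt t * Real.log (1 + Real.sqrt 2)) ≤ x + s := by
        have heq : Real.exp (Real.sqrt t * Real.log (1 + Real.sqrt 2)) =
            (1 + Real.sqrt 2) ^ (Real.sqrt t : ℝ) := by
          rw [Real.rpow_def_of_pos (by linarith)]; ring_nf
        rw [heq]
        have hbern : (1 + Real.sqrt 2) ^ (Real.sqrt t : ℝ) ≤ 1 + Real.sqrt t * Real.sqrt 2 :=
          rpow_one_add_le_one_add_mul_self (by linarith) hst0 hst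
        have hs_ge : Real.sqrt t * Real.sqrt 2 ≤ s := by
          rw [hs, ← Real.sqrt_mul ht0]
          exact Real.sqrt_le_sqrt (by nlinarith)
        have : (1:ℝ) ≤ x := hx1
        linarith
      calc Real.exp ((r : ℝ) * Real.sqrt t * Real.log (1 + Real.sqrt 2))
          = (Real.exp (Real.sqrt t * Real.log (1 + Real.sqrt 2)))^r := by
            rw [← Real.exp_nat_mul]; ring_nf
        _ ≤ (x + s)^r := by
            apply pow_le_pow_left₀ (Real.exp_nonneg _) h1
    linarith
  · -- second inequality
    have : (r : ℝ) * Real.sqrt t / 4 ≤ (r : ℝ) * Real.sqrt t * Real.log (1 + Real.sqrt 2) := by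
      have hr0 : (0:ℝ) ≤ (r : ℝ) * Real.sqrt t := mul_nonneg (Nat.cast_nonneg r) hst0
      nlinarith
    have := Real.exp_le_exp.mpr this
    linarith
end

section
/- Let r ≥ 1 be an integer and let p be a univariate real polynomial of degree at most r such that p(t) ≥ 0 for all t ≥ 0, p(0) = 1, and p(t) ≤ 1 for all t ∈ [0, 1]. Then p(t) ≥ 1 − 2r²t for all t ∈ [0, 1/(2r²)] (and hence p(t) ≥ Λ_r(t) for all t ≥ 0, where Λ_r(t) = max(1 − 2r²t, 0)). -/
/-!
Rescale `p` to `P(x) = 2 p((1 - x)/2) - 1`, a polynomial of degree at most `r` with `|P| ≤ 1`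
on `[-1, 1]` and `P(1) = 1`. Interpolate `P` at the extremal nodes `cos(iπ/r)` of the Chebyshev
polynomial `T_r`, where `T_r` takes the values `(-1)^i`. For `x` between the first two nodes
`1` and `cos(π/r)` the Lagrange basis satisfies `(-1)^i ℓ_i(x) ≤ 0` for `i ≥ 1`, so each term
`P(node i) ℓ_i(x)` dominates `T_r(node i) ℓ_i(x)`, while the terms at the node `1` agree;
hence `P ≥ T_r` there. Finally `1 - T_r(cos θ) = 1 - cos(rθ) ≤ r²(1 - cos θ)`, and
`cos(π/r) ≤ 1 - 2/r²` puts `[0, 1/(2r²)]` inside the range covered.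
-/

open Polynomial Real Finset

lemma Real.abs_sin_nat_mul_le (n : ℕ) (x : ℝ) : |sin (n * x)| ≤ n * |sin x| := by
  induction n with
  | zero => simp
  | succ n ih =>
    rw [Nat.cast_succ, add_mul, one_mul, sin_add]
    calc |sin (n * x) * cos x + cos (n * x) * sin x|
        ≤ |sin (n * x)| * |cos x| + |cos (n * x)| * |sin x| := by
          rw [← abs_mul, ← abs_mul]; exact abs_add_le _ _
      _ ≤ n * |sin x| * 1 + 1 * |sin x| := by
          gcongr
          · exact abs_cos_le_one x
          · exact abs_cos_le_one _
      _ = (n + 1) * |sin x| := by ring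

lemma Real.one_sub_cos_nat_mul_le (n : ℕ) (θ : ℝ) : 1 - cos (n * θ) ≤ n ^ 2 * (1 - cos θ) := by
  have hhalf (y : ℝ) : 1 - cos (2 * y) = 2 * sin y ^ 2 := by rw [sin_sq_eq_half_sub]; ring
  have hsq : sin (n * (θ / 2)) ^ 2 ≤ (n * sin (θ / 2)) ^ 2 := by
    rw [sq_le_sq, abs_mul, Nat.abs_cast]
    exact abs_sin_nat_mul_le n (θ / 2)
  calc 1 - cos (n * θ) = 2 * sin (n * (θ / 2)) ^ 2 := by rw [← hhalf]; ring_nf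
    _ ≤ 2 * (n * sin (θ / 2)) ^ 2 := by gcongr
    _ = n ^ 2 * (1 - cos (2 * (θ / 2))) := by rw [hhalf]; ring
    _ = n ^ 2 * (1 - cos θ) := by rw [mul_div_cancel₀ θ two_ne_zero]

namespace Polynomial.Chebyshev

lemma neg_one_pow_mul_eval_basis_node_nonpos {n i : ℕ} (hi₀ : i ≠ 0) (hin : i ≤ n) {x : ℝ}
    (hx : x ∈ Set.Icc (node n 1) 1) :
    (-1) ^ i * (Lagrange.basis (range (n + 1)) (node n ·) i).eval x ≤ 0 := by
  set S := (range (n + 1)).erase i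
  have hbasis : (Lagrange.basis (range (n + 1)) (node n ·) i).eval x =
      (∏ j ∈ S, (x - node n j)) / ∏ j ∈ S, (node n i - node n j) := by
    rw [Lagrange.basis, eval_prod, div_eq_mul_inv, ← prod_inv_distrib, ← prod_mul_distrib]
    refine prod_congr rfl fun j _ => ?_
    simp [Lagrange.basisDivisor, mul_comm]
  -- only the factor `x - node n 0 = x - 1` is negative
  have hnum : ∏ j ∈ S, (x - node n j) ≤ 0 := by
    rw [← mul_prod_erase S _ (mem_erase.mpr ⟨hi₀.symm, by simp⟩), node_eq_one]
    refine mul_nonpos_of_nonpos_of_nonneg (by linarith [hx.2]) (prod_nonneg fun j hj => ?_)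
    simp only [S, mem_erase, mem_range] at hj
    have : node n j ≤ node n 1 :=
      (strictAntiOn_node n).antitoneOn (by rw [coe_range, Set.mem_Iio]; omega)
        (by rw [coe_range, Set.mem_Iio]; omega) (by omega)
    linarith [hx.1]
  have hsign : (-1) ^ i * ((∏ j ∈ S, (x - node n j)) / ∏ j ∈ S, (node n i - node n j)) =
      (∏ j ∈ S, (x - node n j)) / ((-1) ^ i * ∏ j ∈ S, (node n i - node n j)) := by
    rw [div_mul_eq_div_div_swap, div_eq_mul_inv _ ((-1 : ℝ) ^ i), ← inv_pow, inv_neg_one]; ring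
  rw [hbasis, hsign]
  exact div_nonpos_of_nonpos_of_nonneg hnum (zero_lt_prod_node_sub_node hin).le

lemma sumNodes_eq_eval_one_mul_sub_eval {n : ℕ} {P : ℝ[X]} (hP : P.degree ≤ n) (x : ℝ) :
    sumNodes n (fun i => if i = 0 then 0 else
        -(Lagrange.basis (range (n + 1)) (node n ·) i).eval x) P =
      P.eval 1 * (Lagrange.basis (range (n + 1)) (node n ·) 0).eval x - P.eval x := by
  have hinterp : P.eval x = ∑ i ∈ range (n + 1),
      P.eval (node n i) * (Lagrange.basis (range (n + 1)) (node n ·) i).eval x := by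
    conv_lhs => rw [Lagrange.eq_interpolate (strictAntiOn_node n).injOn
      (hP.trans_lt (by rw [card_range]; exact_mod_cast n.lt_succ_self)), Lagrange.interpolate_apply]
    simp [eval_finsetSum]
  have hterm (a b : ℝ) (i : ℕ) :
      a * (if i = 0 then 0 else -b) = (if i = 0 then a * b else 0) - a * b := by
    split_ifs <;> ring
  simp only [sumNodes, ← Nat.range_succ_eq_Iic, hinterp, hterm, sum_sub_distrib, sum_ite_eq',
    mem_range, Nat.zero_lt_succ, if_true, node_eq_one]

theorem eval_T_le_of_forall_abs_le_one {n : ℕ} {P : ℝ[X]} (hPdeg : P.degree ≤ n)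
    (hPbnd : ∀ x ∈ Set.Icc (-1) 1, |P.eval x| ≤ 1) (hP₁ : P.eval 1 = 1) {x : ℝ}
    (hx : x ∈ Set.Icc (node n 1) 1) :
    (T ℝ n).eval x ≤ P.eval x := by
  have hc : ∀ i ≤ n, 0 ≤ (-1) ^ i * (if i = 0 then 0 else
      -(Lagrange.basis (range (n + 1)) (node n ·) i).eval x) := by
    intro i hi
    split_ifs with hi₀
    · simp
    · linarith [neg_one_pow_mul_eval_basis_node_nonpos hi₀ hi hx]
  have hT : (T ℝ n).degree ≤ n := (degree_T ℝ n).le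
  have := sumNodes_le_sumNodes_T hc hPbnd
  rw [sumNodes_eq_eval_one_mul_sub_eval hPdeg, sumNodes_eq_eval_one_mul_sub_eval hT, hP₁,
    T_eval_one] at this
  linarith

lemma one_sub_eval_T_le {n : ℕ} {x : ℝ} (hx : x ∈ Set.Icc (-1) 1) :
    1 - (T ℝ n).eval x ≤ n ^ 2 * (1 - x) := by
  obtain ⟨θ, rfl⟩ : ∃ θ, cos θ = x := ⟨arccos x, cos_arccos hx.1 hx.2⟩
  rw [T_real_cos, Int.cast_natCast]
  exact one_sub_cos_nat_mul_le n θ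

lemma node_one_le (n : ℕ) : node n 1 ≤ 1 - 2 / n ^ 2 := by
  rcases eq_or_ne n 0 with rfl | hn
  · simp [node]
  have hle : |π / n| ≤ π := by
    rw [abs_of_nonneg (by positivity)]
    exact div_le_self pi_pos.le (by exact_mod_cast Nat.one_le_iff_ne_zero.mpr hn)
  convert cos_le_one_sub_mul_cos_sq hle using 2
  · simp [node]
  · field_simp

end Polynomial.Chebyshev

theorem Polynomial.one_sub_sq_mul_le_eval {n : ℕ} {p : ℝ[X]} (hdeg : p.natDegree ≤ n)
    (hbnd : ∀ t ∈ Set.Icc (0 : ℝ) 1, p.eval t ∈ Set.Icc (0 : ℝ) 1) (h₀ : p.eval 0 = 1) {t : ℝ}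
    (ht : t ∈ Set.Icc 0 ((1 - Chebyshev.node n 1) / 2)) :
    1 - n ^ 2 * t ≤ p.eval t := by
  set P : ℝ[X] := C 2 * p.comp (C 2⁻¹ * (1 - X)) - 1
  have hP (x : ℝ) : P.eval x = 2 * p.eval ((1 - x) / 2) - 1 := by
    simp only [P, eval_sub, eval_mul, eval_C, eval_comp, eval_one, eval_X]; ring_nf
  have hPdeg : P.degree ≤ n := by
    refine degree_le_of_natDegree_le ((natDegree_sub_le _ _).trans (max_le ?_ (by simp)))
    refine (natDegree_C_mul_le _ _).trans (natDegree_comp_le.trans ?_)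
    have : (C (2⁻¹ : ℝ) * (1 - X)).natDegree ≤ 1 := by compute_degree
    exact (Nat.mul_le_mul hdeg this).trans (mul_one n).le
  have hPbnd : ∀ x ∈ Set.Icc (-1 : ℝ) 1, |P.eval x| ≤ 1 := by
    intro x hx
    have := hbnd ((1 - x) / 2) ⟨by linarith [hx.2], by linarith [hx.1]⟩
    rw [hP, abs_le]
    constructor <;> linarith [this.1, this.2]
  have hP₁ : P.eval 1 = 1 := by rw [hP]; norm_num [h₀]
  have hx : 1 - 2 * t ∈ Set.Icc (Chebyshev.node n 1) 1 := ⟨by linarith [ht.2], by linarith [ht.1]⟩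
  have hT := Chebyshev.eval_T_le_of_forall_abs_le_one hPdeg hPbnd hP₁ hx
  have hT' := Chebyshev.one_sub_eval_T_le (n := n)
    (Set.Icc_subset_Icc Chebyshev.node_mem_Icc.1 le_rfl hx)
  rw [hP, show (1 - (1 - 2 * t)) / 2 = t by ring] at hT
  linarith

/-- Lemma: let `r ≥ 1` and let `p` be a univariate real polynomial of degree at most
`r` with `p ≥ 0` on `[0,∞)`, `p(0) = 1`, and `p ≤ 1` on `[0,1]`. Then
`p(t) ≥ 1 - 2r²t` for all `t ∈ [0, 1/(2r²)]`, and hence `p(t) ≥ max(1 - 2r²t, 0)`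
for all `t ≥ 0`. -/
theorem stmt19 (r : ℕ) (hr : 1 ≤ r) (p : Polynomial ℝ)
    (hdeg : p.natDegree ≤ r)
    (hpos : ∀ t : ℝ, 0 ≤ t → 0 ≤ p.eval t)
    (h0 : p.eval 0 = 1)
    (h1 : ∀ t ∈ Set.Icc (0 : ℝ) 1, p.eval t ≤ 1) :
    (∀ t ∈ Set.Icc (0 : ℝ) (1 / (2 * (r : ℝ) ^ 2)), 1 - 2 * (r : ℝ) ^ 2 * t ≤ p.eval t) ∧
    (∀ t : ℝ, 0 ≤ t → max (1 - 2 * (r : ℝ) ^ 2 * t) 0 ≤ p.eval t) := by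
  have hnear : ∀ t ∈ Set.Icc (0 : ℝ) (1 / (2 * (r : ℝ) ^ 2)),
      1 - 2 * (r : ℝ) ^ 2 * t ≤ p.eval t := by
    intro t ht
    have ht' : t ≤ (1 - Chebyshev.node r 1) / 2 := calc
      t ≤ 1 / (2 * (r : ℝ) ^ 2) := ht.2
      _ = (1 / (r : ℝ) ^ 2) / 2 := by ring
      _ ≤ 1 / (r : ℝ) ^ 2 := half_le_self (by positivity)
      _ = (1 - (1 - 2 / (r : ℝ) ^ 2)) / 2 := by ring
      _ ≤ (1 - Chebyshev.node r 1) / 2 := by gcongr; exact Chebyshev.node_one_le r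
    have hp := one_sub_sq_mul_le_eval hdeg (fun t ht => ⟨hpos t ht.1, h1 t ht⟩) h0 ⟨ht.1, ht'⟩
    linarith [mul_nonneg (sq_nonneg (r : ℝ)) ht.1]
  refine ⟨hnear, fun t ht => max_le ?_ (hpos t ht)⟩
  rcases le_or_gt t (1 / (2 * (r : ℝ) ^ 2)) with hsmall | hlarge
  · exact hnear t ⟨ht, hsmall⟩
  · rw [div_lt_iff₀ (by positivity)] at hlarge
    linarith [hpos t ht]
end
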